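/- arXiv:1404.3998 — 4 statements merged into one kernel-verified Lean document; each statement's English description precedes it below -/
import Mathlib

section
/- Let V be a finite-dimensional vector space of dimension r over a commutative ring, and let f be an endomorphism of V. Then Σ_{i=0}^{r} (-1)^i f^i ∘ c_{r-i} = 0, where c_j denotes multiplication by the trace of the induced endomorphism Λ^j(f) of the j-th exterior power of V; i.e., f satisfies its characteristic polynomial whose coefficients are (−1)^j tr(Λ^j f). (Cayley–Hamilton expressed via exterior powers.) -/
/-!
In the basis of `⋀^k M` made of wedges `b_{s₁} ∧ ⋯ ∧ b_{sₖ}` of a basis `b` of `M`, the diagonal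
entries of `Λ^k f` are the `k × k` principal minors of the matrix of `f`. Hence `tr (Λ^k f)` is
the sum of these minors, which is `(-1)^k` times the coefficient of `X^{r-k}` in the
characteristic polynomial, and the theorem is the Cayley–Hamilton theorem up to the sign `(-1)^r`.
-/

open ExteriorAlgebra

lemma exteriorPower_map_le (R M : Type*) [CommRing R] [AddCommGroup M] [Module R M]
    (j : ℕ) (f : M →ₗ[R] M) :
    Submodule.map (ExteriorAlgebra.map f).toLinearMap
        (LinearMap.range (ι R (M := M)) ^ j) ≤ LinearMap.range (ι R (M := M)) ^ j := by
  rw [Submodule.map_pow]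
  have h2 : Submodule.map (ExteriorAlgebra.map f).toLinearMap
      (LinearMap.range (ι R (M := M))) ≤ LinearMap.range (ι R (M := M)) := by
    rw [ExteriorAlgebra.ι_range_map_map]
    exact LinearMap.map_le_range
  induction j with
  | zero => simp
  | succ m ih =>
      rw [pow_succ, pow_succ]
      exact mul_le_mul' ih h2

/-- The endomorphism `Λ^j f` induced by `f : M →ₗ[R] M` on the `j`-th exterior power
`⋀[R]^j M`. -/
noncomputable def exteriorPowerMap (R M : Type*) [CommRing R] [AddCommGroup M] [Module R M]
    (j : ℕ) (f : M →ₗ[R] M) : ⋀[R]^j M →ₗ[R] ⋀[R]^j M :=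
  (ExteriorAlgebra.map f).toLinearMap.restrict (p := ⋀[R]^j M) (q := ⋀[R]^j M)
    (fun x hx => exteriorPower_map_le R M j f (Submodule.mem_map_of_mem hx))

lemma exteriorPowerMap_eq_map (R M : Type*) [CommRing R] [AddCommGroup M] [Module R M]
    (n : ℕ) (f : M →ₗ[R] M) : exteriorPowerMap R M n f = exteriorPower.map n f := by
  refine exteriorPower.linearMap_ext (AlternatingMap.ext fun v => Subtype.ext ?_)
  simp only [LinearMap.compAlternatingMap_apply, exteriorPower.map_apply_ιMulti]
  exact ExteriorAlgebra.map_apply_ιMulti f v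

theorem exteriorPower.trace_map_eq_sum_det_submatrix {R M I : Type*} [CommRing R]
    [AddCommGroup M] [Module R M] [Fintype I] [LinearOrder I] (b : Module.Basis I R M) (n : ℕ)
    (f : Module.End R M) :
    LinearMap.trace R (⋀[R]^n M) (exteriorPower.map n f) =
      ∑ s ∈ Finset.univ.powersetCard n,
        ((LinearMap.toMatrix b b f).submatrix (Subtype.val : s → I) Subtype.val).det := by
  rw [LinearMap.trace_eq_matrix_trace R (b.exteriorPower n), Matrix.trace,
    Finset.sum_subtype (p := (· ∈ Set.powersetCard I n)) _ (by simp)]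
  refine Finset.sum_congr rfl fun s _ => ?_
  rw [Matrix.diag_apply, LinearMap.toMatrix_apply, exteriorPower.basis_apply,
    exteriorPower.map_apply_ιMulti_family, exteriorPower.basis_repr_apply,
    exteriorPower.ιMulti_family, exteriorPower.ιMultiDual_apply_ιMulti, ← Matrix.det_transpose,
    ← Matrix.det_submatrix_equiv_self (s.1.orderIsoOfFin s.2).toEquiv, Matrix.submatrix_submatrix]
  congr 1
  ext i j
  simp only [Set.powersetCard.ofFinEmbEquiv_symm_apply, Function.comp_apply,
    Module.Basis.coord_apply, Matrix.transpose_apply, Matrix.of_apply, RelIso.coe_fn_toEquiv,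
    Matrix.submatrix_apply, LinearMap.toMatrix_apply]
  rfl

theorem LinearMap.charpoly_coeff_eq_neg_one_pow_mul_trace_exteriorPower {R M : Type*}
    [CommRing R] [Nontrivial R] [AddCommGroup M] [Module R M] [Module.Free R M]
    [Module.Finite R M] (f : Module.End R M) {i : ℕ} (hi : i ≤ Module.finrank R M) :
    f.charpoly.coeff i = (-1) ^ (Module.finrank R M - i) *
      LinearMap.trace R _ (exteriorPower.map (Module.finrank R M - i) f) := by
  let b := Module.finBasis R M
  have hminors := (LinearMap.toMatrix b b f).charpoly_coeff_eq_sum_minors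
    (Module.finrank R M - i) (by simp)
  rw [Fintype.card_fin, Nat.sub_sub_self hi] at hminors
  rw [← LinearMap.charpoly_toMatrix f b, hminors, exteriorPower.trace_map_eq_sum_det_submatrix b]

/-- **Cayley–Hamilton via exterior powers**: if `M` is free of rank `r` over a commutative
ring `R` and `f` an endomorphism of `M`, then `Σ_{i=0}^{r} (-1)^i tr(Λ^{r-i} f) • f^i = 0`,
i.e. `f` satisfies its characteristic polynomial, whose coefficients are
`(−1)^j tr(Λ^j f)`. -/
theorem cayley_hamilton_exterior_powers (R M : Type*) [CommRing R] [AddCommGroup M]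
    [Module R M] [Module.Free R M] [Module.Finite R M] (r : ℕ)
    (hr : Module.finrank R M = r) (f : Module.End R M) :
    ∑ i ∈ Finset.range (r + 1),
      ((-1 : R) ^ i * LinearMap.trace R (⋀[R]^(r - i) M) (exteriorPowerMap R M (r - i) f)) •
        (f ^ i) = 0 := by
  rcases subsingleton_or_nontrivial R with hR | hR
  · have := Module.subsingleton R M
    exact Subsingleton.elim _ _
  have hdeg : f.charpoly.natDegree < r + 1 := by rw [LinearMap.charpoly_natDegree, hr]; omega
  calc _ = (-1 : R) ^ r • ∑ i ∈ Finset.range (r + 1), f.charpoly.coeff i • f ^ i := by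
        rw [Finset.smul_sum]
        refine Finset.sum_congr rfl fun i hi => ?_
        obtain ⟨k, rfl⟩ := Nat.exists_eq_add_of_le (Finset.mem_range_succ_iff.mp hi)
        rw [smul_smul, f.charpoly_coeff_eq_neg_one_pow_mul_trace_exteriorPower (by omega), hr,
          exteriorPowerMap_eq_map, Nat.add_sub_cancel_left, pow_add, mul_assoc,
          ← mul_assoc ((-1 : R) ^ k), ← pow_add, Even.neg_one_pow ⟨k, rfl⟩, one_mul]
    _ = 0 := by rw [← Polynomial.aeval_eq_sum_range' hdeg, f.aeval_self_charpoly, smul_zero]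
end

section
/- Let G be a group, Ĝ an affine algebraic group over a field E, and suppose given for every finite set I and every function f in the coordinate ring of the GIT double quotient Ĝ\(Ĝ^I)/Ĝ and every tuple (γ_i)_{i∈I} ∈ G^I an element S_{I,f,(γ_i)} of a commutative E-algebra B, satisfying: (i) f ↦ S_{I,f,(γ_i)} is an algebra homomorphism O(Ĝ\Ĝ^I/Ĝ) → B for each fixed I and (γ_i); (ii) for any map ζ : I → J, S_{J, f^ζ, (γ_j)} = S_{I, f, (γ_{ζ(i)})}, where f^ζ((g_j)_{j∈J}) = f((g_{ζ(i)})_{i∈I}); (iii) S_{I∪I∪I, f̃, (γ_i)×(γ'_i)×(γ''_i)} = S_{I, f, (γ_i (γ'_i)^{-1} γ''_i)}, where f̃((g_i)×(g'_i)×(g''_i)) = f((g_i (g'_i)^{-1} g''_i)). Then for any character ν : B → E and any n, the assignment f ↦ ν(S_{\{0,…,n\}, f∘β^{-1}, (1, γ_1, …, γ_n)}) defines a compatible family of E-points of the GIT quotients (Ĝ^n)//Ĝ (conjugation), functorial in maps {1,…,m} → {1,…,n} and compatible with the multiplication maps (g_1,…,g_{n+1}) ↦ (g_1,…,g_n g_{n+1}).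 -/
open scoped BigOperators

/-- The general linear group `GL_N(k)`. -/
abbrev GLn (N : ℕ) (k : Type) [Field k] := Matrix.GeneralLinearGroup (Fin N) k

variable {k : Type} [Field k] {N : ℕ}

/-- Zariski-closed subsets of the affine space of `ι`-tuples of `N × N` matrices:
zero loci of sets of polynomials in the matrix entries. -/
def IsZClosed {ι : Type} (S : Set (ι → Matrix (Fin N) (Fin N) k)) : Prop :=
  ∃ T : Set (MvPolynomial (ι × Fin N × Fin N) k),
    S = {x | ∀ p ∈ T, MvPolynomial.eval (fun v => x v.1 v.2.1 v.2.2) p = 0}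

/-- Zariski-closed subsets of the affine space of `N × N` matrices. -/
def IsZClosed₁ (S : Set (Matrix (Fin N) (Fin N) k)) : Prop :=
  ∃ T : Set (MvPolynomial (Fin N × Fin N) k),
    S = {A | ∀ p ∈ T, MvPolynomial.eval (fun v => A v.1 v.2) p = 0}

/-- The set of matrices underlying a subgroup of `GL_N(k)`. -/
def matSet (H : Subgroup (GLn N k)) : Set (Matrix (Fin N) (Fin N) k) :=
  (fun g : GLn N k => (g : Matrix (Fin N) (Fin N) k)) '' (H : Set (GLn N k))

/-- A subgroup of `GL_N(k)` is algebraic (Zariski-closed in `GL_N`) if its set of matrices is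
the intersection of a Zariski-closed set with `GL_N`. -/
def IsAlgSubgroup (H : Subgroup (GLn N k)) : Prop :=
  ∃ Z, IsZClosed₁ Z ∧
    matSet H = Z ∩ Set.range (fun g : GLn N k => (g : Matrix (Fin N) (Fin N) k))

/-- An element of `GL_N(k)` is unipotent if `g - 1` is nilpotent. -/
def IsUnipotent (g : GLn N k) : Prop :=
  IsNilpotent ((g : Matrix (Fin N) (Fin N) k) - 1)

/-- A (possibly disconnected) algebraic subgroup of `GL_N(k)` is reductive if, in
characteristic zero, it has no nontrivial normal algebraic unipotent subgroup. -/
def IsReductive (H : Subgroup (GLn N k)) : Prop :=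
  IsAlgSubgroup H ∧
    ∀ U : Subgroup (GLn N k), IsAlgSubgroup U → U ≤ H → (U.subgroupOf H).Normal →
      (∀ u ∈ U, IsUnipotent u) → U = ⊥

/-- `H` is the Zariski closure of the subset `S ⊆ GL_N(k)`: the smallest algebraic subgroup
containing `S`. -/
def IsZClosureOf (H : Subgroup (GLn N k)) (S : Set (GLn N k)) : Prop :=
  IsAlgSubgroup H ∧ S ⊆ (H : Set (GLn N k)) ∧
    ∀ H' : Subgroup (GLn N k), IsAlgSubgroup H' → S ⊆ (H' : Set (GLn N k)) → H ≤ H'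

/-- Regular functions on `GL_N(k)^ι`: polynomials in the matrix entries and in the inverses of
the determinants. -/
def IsRegularFun {ι : Type} [Fintype ι] (f : (ι → GLn N k) → k) : Prop :=
  ∃ (d : ℕ) (P : MvPolynomial (ι × Fin N × Fin N) k), ∀ g : ι → GLn N k,
    f g = MvPolynomial.eval
        (fun v => ((g v.1 : Matrix (Fin N) (Fin N) k)) v.2.1 v.2.2) P *
      ∏ i, (((g i : Matrix (Fin N) (Fin N) k)).det)⁻¹ ^ d

/-- Regular functions on `GL_N(k)`. -/
def IsRegularFun₁ (f : GLn N k → k) : Prop :=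
  ∃ (d : ℕ) (P : MvPolynomial (Fin N × Fin N) k), ∀ g : GLn N k,
    f g = MvPolynomial.eval (fun v => ((g : Matrix (Fin N) (Fin N) k)) v.1 v.2) P *
      (((g : Matrix (Fin N) (Fin N) k)).det)⁻¹ ^ d

/-- Invariance of a function on `G^ι` under simultaneous conjugation by `G`. -/
def ConjInvOn {ι : Type} (G : Subgroup (GLn N k)) (f : (ι → GLn N k) → k) : Prop :=
  ∀ h ∈ G, ∀ g : ι → GLn N k, (∀ i, g i ∈ G) → f (fun i => h * g i * h⁻¹) = f g

/-- Two `ι`-tuples have the same image in the GIT quotient `G^ι // G` (simultaneous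
conjugation) iff all `G`-conjugation-invariant regular functions agree on them. -/
def SameGITPoint {ι : Type} [Fintype ι] (G : Subgroup (GLn N k)) (x y : ι → GLn N k) : Prop :=
  ∀ f : (ι → GLn N k) → k, IsRegularFun f → ConjInvOn G f → f x = f y

/-- A tuple is semisimple if the Zariski closure of the subgroup it generates is reductive. -/
def IsSemisimpleTuple {ι : Type} (g : ι → GLn N k) : Prop :=
  ∃ H : Subgroup (GLn N k),
    IsZClosureOf H ((Subgroup.closure (Set.range g) : Subgroup (GLn N k)) : Set (GLn N k)) ∧
    IsReductive H

/-- A function in `O(Ĝ\Ĝ^I/Ĝ)`: regular on `G^I` and invariant under left and right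
diagonal translation by `G`. -/
def BiInvRegOn {ι : Type} [Fintype ι] (G : Subgroup (GLn N k))
    (f : (ι → GLn N k) → k) : Prop :=
  IsRegularFun f ∧ ∀ h ∈ G, ∀ h' ∈ G, ∀ g : ι → GLn N k, (∀ i, g i ∈ G) →
    f (fun i => h * g i * h') = f g

/-- A function in `O((Ĝ^n)//Ĝ)`: regular and invariant under simultaneous conjugation. -/
def ConjRegOn {ι : Type} [Fintype ι] (G : Subgroup (GLn N k))
    (f : (ι → GLn N k) → k) : Prop :=
  IsRegularFun f ∧ ConjInvOn G f

/-- The function `f ∘ β⁻¹` on `Ĝ^{n+1}` associated via the isomorphism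
`β : (Ĝ^n)//Ĝ ≅ Ĝ\(Ĝ^{n+1})/Ĝ`, `(g_1,…,g_n) ↦ (1, g_1, …, g_n)`, to a conjugation-invariant
function `f` on `Ĝ^n`. -/
def thetaArg {k : Type} [Field k] {N : ℕ} (n : ℕ) (f : (Fin n → GLn N k) → k) :
    (Fin (n + 1) → GLn N k) → k :=
  fun g => f (fun i => g i.succ * (g 0)⁻¹)

/-- The map `(x_1, …, x_{n+1}) ↦ (x_1, …, x_n x_{n+1})` multiplying the last two
coordinates. -/
def mulLast {M : Type} [Mul M] {n : ℕ} (f : Fin (n + 1) → M) : Fin n → M :=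
  fun i => if (i : ℕ) + 1 < n then f i.castSucc else f i.castSucc * f (Fin.last n)

/-!
The point `Θ_n^ν` is well defined and multiplicative because `β` identifies
`O((Ĝ^n)//Ĝ)` with `O(Ĝ\Ĝ^{n+1}/Ĝ)`: for conjugation-invariant regular `f`, the function
`(g_0, …, g_n) ↦ f(g_1 g_0⁻¹, …, g_n g_0⁻¹)` is regular and bi-invariant, so axiom (i) applies.
A map `ζ : {1,…,m} → {1,…,n}` extended by `0 ↦ 0` turns `f ∘ ζ^*` into the pullback of
`f ∘ β⁻¹` along that extension, which is axiom (ii). Multiplying the last two coordinates is a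
pullback along a map of index sets of the function `f̃` of axiom (iii), so it follows from (ii)
and (iii) together. The regularity statements hold because regular functions form a `k`-algebra
that is stable under substitution of regular maps, such as products and inverses of coordinates.
-/
open MvPolynomial Matrix

section Regularity

variable {ι κ : Type} [Fintype ι] [Fintype κ]

theorem isRegularFun_eval (P : MvPolynomial (ι × Fin N × Fin N) k) :
    IsRegularFun fun g : ι → GLn N k =>
      eval (fun v => (g v.1 : Matrix (Fin N) (Fin N) k) v.2.1 v.2.2) P :=
  ⟨0, P, fun g => by simp⟩

theorem isRegularFun_const (c : k) : IsRegularFun fun _ : ι → GLn N k => c := by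
  simpa using isRegularFun_eval (ι := ι) (N := N) (C c)

theorem isRegularFun_iff {f : (ι → GLn N k) → k} :
    IsRegularFun f ↔ ∃ (d : ℕ) (P : MvPolynomial (ι × Fin N × Fin N) k), ∀ g : ι → GLn N k,
      f g = eval (fun v => (g v.1 : Matrix (Fin N) (Fin N) k) v.2.1 v.2.2) P *
        (∏ i, (g i : Matrix (Fin N) (Fin N) k).det)⁻¹ ^ d := by
  simp only [IsRegularFun, Finset.prod_pow, Finset.prod_inv_distrib]

theorem prod_det_ne_zero (g : ι → GLn N k) : ∏ i, (g i : Matrix (Fin N) (Fin N) k).det ≠ 0 :=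
  Finset.prod_ne_zero_iff.2 fun i _ => (g i).det_ne_zero

theorem isRegularFun_prod_det_inv :
    IsRegularFun fun g : ι → GLn N k => (∏ i, (g i : Matrix (Fin N) (Fin N) k).det)⁻¹ :=
  isRegularFun_iff.2 ⟨1, 1, fun g => by simp⟩

theorem IsRegularFun.add {f f' : (ι → GLn N k) → k} (hf : IsRegularFun f)
    (hf' : IsRegularFun f') : IsRegularFun (f + f') := by
  obtain ⟨d, P, hP⟩ := isRegularFun_iff.1 hf
  obtain ⟨d', P', hP'⟩ := isRegularFun_iff.1 hf'
  let D : MvPolynomial (ι × Fin N × Fin N) k := ∏ i, (Matrix.of fun a b => X (i, a, b)).det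
  refine isRegularFun_iff.2 ⟨d + d', P * D ^ d' + P' * D ^ d, fun g => ?_⟩
  have hD : eval (fun v => (g v.1 : Matrix (Fin N) (Fin N) k) v.2.1 v.2.2) D =
      ∏ i, (g i : Matrix (Fin N) (Fin N) k).det := by
    simp only [D, map_prod, RingHom.map_det]
    congr! with i
    ext a b
    simp
  have hcancel (e : ℕ) : (∏ i, (g i : Matrix (Fin N) (Fin N) k).det) ^ e *
      (∏ i, (g i : Matrix (Fin N) (Fin N) k).det)⁻¹ ^ e = 1 := by
    rw [← mul_pow, mul_inv_cancel₀ (prod_det_ne_zero g), one_pow]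
  simp only [Pi.add_apply, hP, hP', map_add, map_mul, map_pow, hD]
  linear_combination
    (-(eval (fun v => (g v.1 : Matrix (Fin N) (Fin N) k) v.2.1 v.2.2) P *
      (∏ i, (g i : Matrix (Fin N) (Fin N) k).det)⁻¹ ^ d)) * hcancel d' -
    (eval (fun v => (g v.1 : Matrix (Fin N) (Fin N) k) v.2.1 v.2.2) P' *
      (∏ i, (g i : Matrix (Fin N) (Fin N) k).det)⁻¹ ^ d') * hcancel d

theorem IsRegularFun.mul {f f' : (ι → GLn N k) → k} (hf : IsRegularFun f)
    (hf' : IsRegularFun f') : IsRegularFun (f * f') := by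
  obtain ⟨d, P, hP⟩ := isRegularFun_iff.1 hf
  obtain ⟨d', P', hP'⟩ := isRegularFun_iff.1 hf'
  exact isRegularFun_iff.2 ⟨d + d', P * P', fun g => by
    simp only [Pi.mul_apply, hP, hP', map_mul]; ring⟩

variable (k N ι) in
def regularFunctions : Subalgebra k ((ι → GLn N k) → k) where
  carrier := {f | IsRegularFun f}
  mul_mem' := IsRegularFun.mul
  add_mem' := IsRegularFun.add
  algebraMap_mem' c := by
    simpa [Pi.algebraMap_def] using isRegularFun_const (ι := ι) (N := N) c

theorem isRegularFun_eval_comp {σ : Type} {F : σ → (ι → GLn N k) → k}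
    (hF : ∀ v, IsRegularFun (F v)) (P : MvPolynomial σ k) :
    IsRegularFun fun g => eval (fun v => F v g) P := by
  induction P using MvPolynomial.induction_on with
  | C c => simpa using isRegularFun_const c
  | add p q hp hq => simp only [map_add]; exact hp.add hq
  | mul_X p v hp => simp only [map_mul, eval_X]; exact hp.mul (hF v)

def IsRegularMap (w : (ι → GLn N k) → GLn N k) : Prop :=
  (∀ a b, IsRegularFun fun g => (w g : Matrix (Fin N) (Fin N) k) a b) ∧
    IsRegularFun fun g => (w g : Matrix (Fin N) (Fin N) k).det⁻¹

theorem isRegularFun_eval_entries {w : (ι → GLn N k) → GLn N k}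
    (hw : ∀ a b, IsRegularFun fun g => (w g : Matrix (Fin N) (Fin N) k) a b)
    (P : MvPolynomial (Fin N × Fin N) k) :
    IsRegularFun fun g => eval (fun p => (w g : Matrix (Fin N) (Fin N) k) p.1 p.2) P := by
  exact (isRegularFun_eval_comp (F := fun p g => (w g : Matrix (Fin N) (Fin N) k) p.1 p.2)
    (fun p => hw p.1 p.2) P :)

theorem eval_mvPolynomialX_adjugate (A : Matrix (Fin N) (Fin N) k) (a b : Fin N) :
    eval (fun p => A p.1 p.2) ((mvPolynomialX (Fin N) (Fin N) k).adjugate a b) =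
      A.adjugate a b := by
  have := congrFun₂ (RingHom.map_adjugate (eval fun p => A p.1 p.2)
    (mvPolynomialX (Fin N) (Fin N) k)) a b
  rwa [mvPolynomialX_mapMatrix_eval] at this

theorem isRegularFun_det_of_entries {w : (ι → GLn N k) → GLn N k}
    (hw : ∀ a b, IsRegularFun fun g => (w g : Matrix (Fin N) (Fin N) k) a b) :
    IsRegularFun fun g => (w g : Matrix (Fin N) (Fin N) k).det := by
  simpa only [RingHom.map_det, mvPolynomialX_mapMatrix_eval] using
    isRegularFun_eval_entries hw (mvPolynomialX (Fin N) (Fin N) k).det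

theorem isRegularMap_apply (i : ι) : IsRegularMap fun g : ι → GLn N k => g i := by
  classical
  have hentries (j : ι) (a b : Fin N) :
      IsRegularFun fun g : ι → GLn N k => (g j : Matrix (Fin N) (Fin N) k) a b := by
    simpa using isRegularFun_eval (ι := ι) (N := N) (X (j, a, b))
  refine ⟨hentries i, ?_⟩
  -- `det (g i)⁻¹ = (∏_{j ≠ i} det (g j)) * (∏_j det (g j))⁻¹`
  have hprod : IsRegularFun fun g : ι → GLn N k =>
      ∏ j ∈ Finset.univ.erase i, (g j : Matrix (Fin N) (Fin N) k).det := by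
    rw [← Finset.prod_fn]
    exact (regularFunctions k N ι).prod_mem fun j _ => isRegularFun_det_of_entries (hentries j)
  convert hprod.mul isRegularFun_prod_det_inv using 1
  ext g
  rw [Pi.mul_apply, ← Finset.prod_erase_mul _ _ (Finset.mem_univ i), mul_inv,
    ← mul_assoc, mul_inv_cancel₀ (Finset.prod_ne_zero_iff.2 fun j _ => (g j).det_ne_zero),
    one_mul]

theorem IsRegularMap.mul {w w' : (ι → GLn N k) → GLn N k} (hw : IsRegularMap w)
    (hw' : IsRegularMap w') : IsRegularMap (w * w') := by
  refine ⟨fun a b => ?_, ?_⟩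
  · simp only [Pi.mul_apply, Units.val_mul, Matrix.mul_apply]
    rw [← Finset.sum_fn]
    exact (regularFunctions k N ι).sum_mem fun c _ => (hw.1 a c).mul (hw'.1 c b)
  · simp only [Pi.mul_apply, Units.val_mul, det_mul, mul_inv]
    exact hw.2.mul hw'.2

theorem IsRegularMap.inv {w : (ι → GLn N k) → GLn N k} (hw : IsRegularMap w) :
    IsRegularMap w⁻¹ := by
  refine ⟨fun a b => ?_, ?_⟩
  · simp only [Pi.inv_apply, coe_units_inv, inv_def, Ring.inverse_eq_inv', Matrix.smul_apply,
      smul_eq_mul]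
    have hadj := isRegularFun_eval_entries hw.1 ((mvPolynomialX (Fin N) (Fin N) k).adjugate a b)
    simp only [eval_mvPolynomialX_adjugate] at hadj
    exact hw.2.mul hadj
  · simpa [Pi.inv_apply, coe_units_inv, det_nonsing_inv] using isRegularFun_det_of_entries hw.1

theorem IsRegularFun.comp {f : (ι → GLn N k) → k} (hf : IsRegularFun f)
    {w : ι → (κ → GLn N k) → GLn N k} (hw : ∀ i, IsRegularMap (w i)) :
    IsRegularFun fun g => f fun i => w i g := by
  obtain ⟨d, P, hP⟩ := hf
  simp only [hP]
  have hpoly := isRegularFun_eval_comp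
    (F := fun v g => (w v.1 g : Matrix (Fin N) (Fin N) k) v.2.1 v.2.2)
    (fun v => (hw v.1).1 v.2.1 v.2.2) P
  have hdet : IsRegularFun fun g =>
      ∏ i, (w i g : Matrix (Fin N) (Fin N) k).det⁻¹ ^ d := by
    rw [← Finset.prod_fn]
    exact (regularFunctions k N κ).prod_mem fun i _ => (regularFunctions k N κ).pow_mem (hw i).2 d
  exact hpoly.mul hdet

end Regularity

theorem ConjRegOn.biInvRegOn_thetaArg {G : Subgroup (GLn N k)} {n : ℕ}
    {f : (Fin n → GLn N k) → k} (hf : ConjRegOn G f) : BiInvRegOn G (thetaArg n f) := by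
  refine ⟨hf.1.comp fun i => (isRegularMap_apply i.succ).mul (isRegularMap_apply 0).inv, ?_⟩
  intro h hh h' _ g hg
  have hconj : (fun i : Fin n => h * g i.succ * h' * (h * g 0 * h')⁻¹) =
      fun i => h * (g i.succ * (g 0)⁻¹) * h⁻¹ := by
    funext i
    group
  simp only [thetaArg, hconj]
  exact hf.2 h hh _ fun i => G.mul_mem (hg _) (G.inv_mem (hg 0))

theorem BiInvRegOn.comp_mul_inv_mul {G : Subgroup (GLn N k)} {I : Type} [Fintype I]
    {f : (I → GLn N k) → k} (hf : BiInvRegOn G f) :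
    BiInvRegOn G fun x : I ⊕ I ⊕ I → GLn N k =>
      f fun i => x (.inl i) * (x (.inr (.inl i)))⁻¹ * x (.inr (.inr i)) := by
  refine ⟨hf.1.comp fun i => ((isRegularMap_apply _).mul (isRegularMap_apply _).inv).mul
    (isRegularMap_apply _), ?_⟩
  intro h hh h' hh' x hx
  have htranslate : (fun i : I => h * x (.inl i) * h' * (h * x (.inr (.inl i)) * h')⁻¹ *
      (h * x (.inr (.inr i)) * h')) =
      fun i => h * (x (.inl i) * (x (.inr (.inl i)))⁻¹ * x (.inr (.inr i))) * h' := by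
    funext i
    group
  simp only [htranslate]
  exact hf.2 h hh h' hh' _ fun i => G.mul_mem (G.mul_mem (hx _) (G.inv_mem (hx _))) (hx _)

theorem thetaArg_mul {n : ℕ} (f f' : (Fin n → GLn N k) → k) :
    thetaArg n (f * f') = thetaArg n f * thetaArg n f' := rfl

theorem thetaArg_add {n : ℕ} (f f' : (Fin n → GLn N k) → k) :
    thetaArg n (f + f') = thetaArg n f + thetaArg n f' := rfl

theorem thetaArg_const {n : ℕ} (c : k) :
    thetaArg n (fun _ : Fin n → GLn N k => c) = fun _ => c := rfl

/-- With `x = y ∘ castSucc`, `x' = y 0` and `x'' = y ∘ mulLastIndex n`, the product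
`x * x'⁻¹ * x''` is `(y 0, …, y (n-1), y n * (y 0)⁻¹ * y (n+1))`. Index `0` goes to `0`
even when `n = 0`, so the entry `1` in front of `γ` is preserved. -/
def mulLastIndex (n : ℕ) : Fin (n + 1) → Fin (n + 2) :=
  Fin.cons 0 fun i : Fin n => if (i : ℕ) + 1 < n then 0 else Fin.last (n + 1)

theorem thetaArg_comp_mulLast {n : ℕ} (f : (Fin n → GLn N k) → k) :
    thetaArg (n + 1) (fun g => f (mulLast g)) =
      fun y => thetaArg n f fun j => y j.castSucc * (y 0)⁻¹ * y (mulLastIndex n j) := by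
  funext y
  simp only [thetaArg]
  congr 1
  funext i
  simp only [mulLast, mulLastIndex, Fin.cons_zero, Fin.cons_succ, Fin.castSucc_zero,
    ← Fin.succ_castSucc]
  split_ifs
  · group
  · rw [← Fin.succ_last]
    group

theorem cons_one_mulLast {M : Type} [Group M] {n : ℕ} (γ : Fin (n + 1) → M) :
    (fun j => (Fin.cons 1 γ : Fin (n + 2) → M) j.castSucc *
      ((Fin.cons 1 γ : Fin (n + 2) → M) 0)⁻¹ *
        (Fin.cons 1 γ : Fin (n + 2) → M) (mulLastIndex n j)) =
      Fin.cons 1 (mulLast γ) := by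
  ext j
  cases j using Fin.cases with
  | zero => simp [mulLastIndex]
  | succ i =>
    simp only [mulLast, mulLastIndex, Fin.cons_zero, Fin.cons_succ, ← Fin.succ_castSucc]
    split_ifs
    · simp
    · simp [← Fin.succ_last]

section Excursion

variable {Γ B : Type} [Group Γ]

/-- Axiom (ii) for excursion operators. -/
def ExcursionFunctorial (G : Subgroup (GLn N k))
    (S : ∀ (I : Type) [Fintype I], ((I → GLn N k) → k) → (I → Γ) → B) : Prop :=
  ∀ (I J : Type) [Fintype I] [Fintype J] (ζ : I → J) (f : (I → GLn N k) → k),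
    BiInvRegOn G f → ∀ γ : J → Γ, S J (fun g => f (fun i => g (ζ i))) γ = S I f (fun i => γ (ζ i))

/-- Axiom (iii) for excursion operators. -/
def ExcursionComposition (G : Subgroup (GLn N k))
    (S : ∀ (I : Type) [Fintype I], ((I → GLn N k) → k) → (I → Γ) → B) : Prop :=
  ∀ (I : Type) [Fintype I] (f : (I → GLn N k) → k), BiInvRegOn G f → ∀ γ γ' γ'' : I → Γ,
    S (I ⊕ I ⊕ I)
      (fun g => f (fun i =>
        g (Sum.inl i) * (g (Sum.inr (Sum.inl i)))⁻¹ * g (Sum.inr (Sum.inr i))))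
      (Sum.elim γ (Sum.elim γ' γ''))
      = S I f (fun i => γ i * (γ' i)⁻¹ * γ'' i)

variable {G : Subgroup (GLn N k)}
  {S : ∀ (I : Type) [Fintype I], ((I → GLn N k) → k) → (I → Γ) → B}

theorem ExcursionFunctorial.thetaArg_comp (hS : ExcursionFunctorial G S) {m n : ℕ}
    (ζ : Fin m → Fin n) {f : (Fin m → GLn N k) → k} (hf : ConjRegOn G f) (γ : Fin n → Γ) :
    S (Fin (n + 1)) (thetaArg n fun g => f fun i => g (ζ i)) (Fin.cons 1 γ) =
      S (Fin (m + 1)) (thetaArg m f) (Fin.cons 1 fun i => γ (ζ i)) := by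
  refine (hS _ _ (Fin.cons 0 fun i => (ζ i).succ) _ hf.biInvRegOn_thetaArg _).trans
    (congrArg _ ?_)
  ext j
  cases j using Fin.cases <;> rfl

theorem ExcursionFunctorial.comp_mul_inv_mul (hS : ExcursionFunctorial G S)
    (hS' : ExcursionComposition G S) {I J : Type} [Fintype I] [Fintype J]
    {f : (I → GLn N k) → k} (hf : BiInvRegOn G f) (a b c : I → J) (γ : J → Γ) :
    S J (fun y => f fun i => y (a i) * (y (b i))⁻¹ * y (c i)) γ =
      S I f (fun i => γ (a i) * (γ (b i))⁻¹ * γ (c i)) := by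
  have hpullback := hS (I ⊕ I ⊕ I) J (Sum.elim a (Sum.elim b c)) _ hf.comp_mul_inv_mul γ
  rw [← Function.comp_def γ, Sum.comp_elim, Sum.comp_elim] at hpullback
  exact hpullback.trans (hS' I f hf _ _ _)

theorem ExcursionFunctorial.thetaArg_mulLast (hS : ExcursionFunctorial G S)
    (hS' : ExcursionComposition G S) {n : ℕ} {f : (Fin n → GLn N k) → k} (hf : ConjRegOn G f)
    (γ : Fin (n + 1) → Γ) :
    S (Fin (n + 2)) (thetaArg (n + 1) fun g => f (mulLast g)) (Fin.cons 1 γ) =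
      S (Fin (n + 1)) (thetaArg n f) (Fin.cons 1 (mulLast γ)) := by
  rw [thetaArg_comp_mulLast, hS.comp_mul_inv_mul hS' hf.biInvRegOn_thetaArg Fin.castSucc
    (fun _ => 0) (mulLastIndex n), cons_one_mulLast]

end Excursion

theorem excursion_characters_give_compatible_git_points_general
    {k : Type} [Field k] {N : ℕ} {Γ : Type} [Group Γ]
    (G : Subgroup (GLn N k))
    (B : Type) [CommRing B] [Algebra k B]
    (S : ∀ (I : Type) [Fintype I], ((I → GLn N k) → k) → (I → Γ) → B)
    -- (i) algebra-homomorphism property in `f`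
    (hadd : ∀ (I : Type) [Fintype I], ∀ f f' : (I → GLn N k) → k, BiInvRegOn G f →
      BiInvRegOn G f' → ∀ γ : I → Γ, S I (f + f') γ = S I f γ + S I f' γ)
    (hmul : ∀ (I : Type) [Fintype I], ∀ f f' : (I → GLn N k) → k, BiInvRegOn G f →
      BiInvRegOn G f' → ∀ γ : I → Γ, S I (f * f') γ = S I f γ * S I f' γ)
    (hconst : ∀ (I : Type) [Fintype I], ∀ (c : k) (γ : I → Γ),
      S I (fun _ => c) γ = algebraMap k B c)
    -- (ii) compatibility with maps of index sets
    (hfunct : ∀ (I J : Type) [Fintype I] [Fintype J] (ζ : I → J)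
      (f : (I → GLn N k) → k), BiInvRegOn G f → ∀ γ : J → Γ,
        S J (fun g => f (fun i => g (ζ i))) γ = S I f (fun i => γ (ζ i)))
    -- (iii) the composition property on `I ∪ I ∪ I`
    (htriple : ∀ (I : Type) [Fintype I] (f : (I → GLn N k) → k), BiInvRegOn G f →
      ∀ γ γ' γ'' : I → Γ,
        S (I ⊕ I ⊕ I)
          (fun g => f (fun i =>
            g (Sum.inl i) * (g (Sum.inr (Sum.inl i)))⁻¹ * g (Sum.inr (Sum.inr i))))
          (Sum.elim γ (Sum.elim γ' γ''))
          = S I f (fun i => γ i * (γ' i)⁻¹ * γ'' i))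
    -- a character of the algebra `B`
    (ν : B →ₐ[k] k) :
    -- each `Θ_n^ν` is a `k`-point of `(Ĝ^n)//Ĝ`, i.e. a character of the invariant ring
    (∀ (n : ℕ) (f f' : (Fin n → GLn N k) → k), ConjRegOn G f → ConjRegOn G f' →
      ∀ γ : Fin n → Γ,
        ν (S (Fin (n + 1)) (thetaArg n (f * f')) (Fin.cons 1 γ)) =
          ν (S (Fin (n + 1)) (thetaArg n f) (Fin.cons 1 γ)) *
            ν (S (Fin (n + 1)) (thetaArg n f') (Fin.cons 1 γ))) ∧
    (∀ (n : ℕ) (f f' : (Fin n → GLn N k) → k), ConjRegOn G f → ConjRegOn G f' →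
      ∀ γ : Fin n → Γ,
        ν (S (Fin (n + 1)) (thetaArg n (f + f')) (Fin.cons 1 γ)) =
          ν (S (Fin (n + 1)) (thetaArg n f) (Fin.cons 1 γ)) +
            ν (S (Fin (n + 1)) (thetaArg n f') (Fin.cons 1 γ))) ∧
    (∀ (n : ℕ) (c : k) (γ : Fin n → Γ),
      ν (S (Fin (n + 1)) (thetaArg n (fun _ => c)) (Fin.cons 1 γ)) = c) ∧
    -- functoriality under all maps `{1,…,m} → {1,…,n}`
    (∀ (m n : ℕ) (ζ : Fin m → Fin n) (f : (Fin m → GLn N k) → k), ConjRegOn G f →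
      ∀ γ : Fin n → Γ,
        ν (S (Fin (n + 1)) (thetaArg n (fun g => f (fun i => g (ζ i)))) (Fin.cons 1 γ)) =
          ν (S (Fin (m + 1)) (thetaArg m f) (Fin.cons 1 (fun i => γ (ζ i))))) ∧
    -- compatibility with the multiplication maps `(g_1,…,g_{n+1}) ↦ (g_1,…,g_n g_{n+1})`
    (∀ (n : ℕ) (f : (Fin n → GLn N k) → k), ConjRegOn G f → ∀ γ : Fin (n + 1) → Γ,
      ν (S (Fin (n + 2)) (thetaArg (n + 1) (fun g => f (mulLast g))) (Fin.cons 1 γ)) =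
        ν (S (Fin (n + 1)) (thetaArg n f) (Fin.cons 1 (mulLast γ)))) := by
  refine ⟨fun n f f' hf hf' γ => ?_, fun n f f' hf hf' γ => ?_, fun n c γ => ?_,
    fun m n ζ f hf γ => congrArg ν (ExcursionFunctorial.thetaArg_comp hfunct ζ hf γ),
    fun n f hf γ => congrArg ν (ExcursionFunctorial.thetaArg_mulLast hfunct htriple hf γ)⟩
  · rw [thetaArg_mul, hmul _ _ _ hf.biInvRegOn_thetaArg hf'.biInvRegOn_thetaArg, map_mul]
  · rw [thetaArg_add, hadd _ _ _ hf.biInvRegOn_thetaArg hf'.biInvRegOn_thetaArg, map_add]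
  · rw [thetaArg_const, hconst, AlgHom.commutes, Algebra.algebraMap_self_apply]

/-- **Formal consequences of the excursion-operator axioms**: given operators
`S_{I,f,(γ_i)} ∈ B` satisfying (i) the algebra-homomorphism property in `f`, (ii)
compatibility with maps of index sets `ζ : I → J`, and (iii) the composition-of-loops
property, every character `ν : B → k` yields a compatible family
`Θ_n^ν : O((Ĝ^n)//Ĝ) → C(Γ^n, k)`, `f ↦ ((γ_i) ↦ ν(S_{{0,…,n}, f∘β⁻¹, (1,γ_1,…,γ_n)}))`,
of `k`-points of the GIT quotients `(Ĝ^n)//Ĝ`, functorial under maps `{1,…,m} → {1,…,n}`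
and compatible with the multiplication maps `(g_1,…,g_{n+1}) ↦ (g_1,…,g_n g_{n+1})`. -/
theorem excursion_characters_give_compatible_git_points
    {k : Type} [Field k] {N : ℕ} {Γ : Type} [Group Γ]
    (G : Subgroup (GLn N k)) (hGalg : IsAlgSubgroup G)
    (B : Type) [CommRing B] [Algebra k B]
    (S : ∀ (I : Type) [Fintype I], ((I → GLn N k) → k) → (I → Γ) → B)
    -- (i) algebra-homomorphism property in `f`
    (hadd : ∀ (I : Type) [Fintype I], ∀ f f' : (I → GLn N k) → k, BiInvRegOn G f →
      BiInvRegOn G f' → ∀ γ : I → Γ, S I (f + f') γ = S I f γ + S I f' γ)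
    (hmul : ∀ (I : Type) [Fintype I], ∀ f f' : (I → GLn N k) → k, BiInvRegOn G f →
      BiInvRegOn G f' → ∀ γ : I → Γ, S I (f * f') γ = S I f γ * S I f' γ)
    (hconst : ∀ (I : Type) [Fintype I], ∀ (c : k) (γ : I → Γ),
      S I (fun _ => c) γ = algebraMap k B c)
    -- (ii) compatibility with maps of index sets
    (hfunct : ∀ (I J : Type) [Fintype I] [Fintype J] (ζ : I → J)
      (f : (I → GLn N k) → k), BiInvRegOn G f → ∀ γ : J → Γ,
        S J (fun g => f (fun i => g (ζ i))) γ = S I f (fun i => γ (ζ i)))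
    -- (iii) the composition property on `I ∪ I ∪ I`
    (htriple : ∀ (I : Type) [Fintype I] (f : (I → GLn N k) → k), BiInvRegOn G f →
      ∀ γ γ' γ'' : I → Γ,
        S (I ⊕ I ⊕ I)
          (fun g => f (fun i =>
            g (Sum.inl i) * (g (Sum.inr (Sum.inl i)))⁻¹ * g (Sum.inr (Sum.inr i))))
          (Sum.elim γ (Sum.elim γ' γ''))
          = S I f (fun i => γ i * (γ' i)⁻¹ * γ'' i))
    -- a character of the algebra `B`
    (ν : B →ₐ[k] k) :
    -- each `Θ_n^ν` is a `k`-point of `(Ĝ^n)//Ĝ`, i.e. a character of the invariant ring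
    (∀ (n : ℕ) (f f' : (Fin n → GLn N k) → k), ConjRegOn G f → ConjRegOn G f' →
      ∀ γ : Fin n → Γ,
        ν (S (Fin (n + 1)) (thetaArg n (f * f')) (Fin.cons 1 γ)) =
          ν (S (Fin (n + 1)) (thetaArg n f) (Fin.cons 1 γ)) *
            ν (S (Fin (n + 1)) (thetaArg n f') (Fin.cons 1 γ))) ∧
    (∀ (n : ℕ) (f f' : (Fin n → GLn N k) → k), ConjRegOn G f → ConjRegOn G f' →
      ∀ γ : Fin n → Γ,
        ν (S (Fin (n + 1)) (thetaArg n (f + f')) (Fin.cons 1 γ)) =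
          ν (S (Fin (n + 1)) (thetaArg n f) (Fin.cons 1 γ)) +
            ν (S (Fin (n + 1)) (thetaArg n f') (Fin.cons 1 γ))) ∧
    (∀ (n : ℕ) (c : k) (γ : Fin n → Γ),
      ν (S (Fin (n + 1)) (thetaArg n (fun _ => c)) (Fin.cons 1 γ)) = c) ∧
    -- functoriality under all maps `{1,…,m} → {1,…,n}`
    (∀ (m n : ℕ) (ζ : Fin m → Fin n) (f : (Fin m → GLn N k) → k), ConjRegOn G f →
      ∀ γ : Fin n → Γ,
        ν (S (Fin (n + 1)) (thetaArg n (fun g => f (fun i => g (ζ i)))) (Fin.cons 1 γ)) =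
          ν (S (Fin (m + 1)) (thetaArg m f) (Fin.cons 1 (fun i => γ (ζ i))))) ∧
    -- compatibility with the multiplication maps `(g_1,…,g_{n+1}) ↦ (g_1,…,g_n g_{n+1})`
    (∀ (n : ℕ) (f : (Fin n → GLn N k) → k), ConjRegOn G f → ∀ γ : Fin (n + 1) → Γ,
      ν (S (Fin (n + 2)) (thetaArg (n + 1) (fun g => f (mulLast g))) (Fin.cons 1 γ)) =
        ν (S (Fin (n + 1)) (thetaArg n f) (Fin.cons 1 (mulLast γ)))) :=
  excursion_characters_give_compatible_git_points_general G B S hadd hmul hconst hfunct htriple ν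
end

section
/- Let Ĝ be a reductive algebraic group over an algebraically closed field E of characteristic zero and I a finite set. Every regular function f on the double quotient Ĝ\(Ĝ^I)/Ĝ (GIT quotient by left and right diagonal translation) is of the form f((g_i)_{i∈I}) = ⟨ξ, (g_i)_{i∈I} · x⟩ for some finite-dimensional representation W of Ĝ^I and vectors x ∈ W, ξ ∈ W* both invariant under the diagonal Ĝ-action. -/
open scoped BigOperators

variable {k : Type} [Field k] {N : ℕ}

/-! The right translates of `f|_{G^I}` span a finite-dimensional space `W`: translating a
polynomial in the matrix entries by a fixed matrix is a linear substitution, which does not raise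
the total degree. Let `G^I` act on `W` by right translation and take `x = f` and `ξ` = evaluation
at `1`, so that `ξ (g • x) = f g`. Right diagonal invariance of `f` says that `x` is fixed; left
diagonal invariance of `f` is inherited by every element of `W`, which makes `ξ` invariant.
Since the evaluation functionals span `W*`, every matrix coefficient of `W` is a combination of
two-sided translates of `f`, hence regular. -/

open TannakaDuality.FiniteGroup (rightRegular)

universe u

lemma Submodule.span_range_proj_comp_subtype_eq_top {k X : Type*} [Field k]
    (V : Submodule k (X → k)) [FiniteDimensional k V] :
    Submodule.span k (Set.range fun x : X => (LinearMap.proj x).comp V.subtype) = ⊤ := by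
  refine Submodule.span_eq_top_of_ne_zero fun w hw => ?_
  obtain ⟨u, hu⟩ := Function.ne_iff.mp (Subtype.coe_ne_coe.mpr hw)
  exact ⟨_, ⟨u, rfl⟩, hu⟩

section Translates

variable {k Γ : Type u} [Field k] [Group Γ]

def translatesSpan (φ : Γ → k) : Subrepresentation (rightRegular (k := k) (G := Γ)) where
  toSubmodule := Submodule.span k (Set.range fun h => rightRegular h φ)
  apply_mem_toSubmodule g v hv := by
    have hle : (Submodule.span k (Set.range fun h => rightRegular h φ)).map (rightRegular g) ≤
        Submodule.span k (Set.range fun h => rightRegular h φ) := by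
      rw [Submodule.map_span_le]
      rintro _ ⟨h, rfl⟩
      exact Submodule.subset_span ⟨g * h, by ext; simp [mul_assoc]⟩
    exact hle (Submodule.mem_map_of_mem hv)

lemma mem_translatesSpan_self (φ : Γ → k) : φ ∈ (translatesSpan φ).toSubmodule :=
  Submodule.subset_span ⟨1, by ext; simp⟩

@[simp]
lemma translatesSpan_toRepresentation_apply (φ : Γ → k) (g : Γ)
    (w : (translatesSpan φ).toSubmodule) (u : Γ) :
    ((translatesSpan φ).toRepresentation g w : Γ → k) u = (w : Γ → k) (u * g) :=
  rfl

lemma translatesSpan_le {φ : Γ → k} {V : Submodule k (Γ → k)}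
    (hV : ∀ h, rightRegular h φ ∈ V) : (translatesSpan φ).toSubmodule ≤ V :=
  Submodule.span_le.mpr (Set.range_subset_iff.mpr hV)

lemma apply_mul_left_of_mem_translatesSpan {φ : Γ → k} {d : Γ} (hφ : ∀ u, φ (d * u) = φ u)
    {w : Γ → k} (hw : w ∈ (translatesSpan φ).toSubmodule) (u : Γ) : w (d * u) = w u := by
  suffices (translatesSpan φ).toSubmodule ≤
      LinearMap.ker (LinearMap.funLeft k k (d * ·) - LinearMap.id) from
    sub_eq_zero.mp (congrFun (this hw) u)
  refine translatesSpan_le fun h => ?_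
  ext u
  simp [mul_assoc, hφ]

lemma translatesSpan_le_comap_funLeft {φ : Γ → k} {V : Submodule k (Γ → k)}
    (hV : ∀ u h, (fun g => φ (u * g * h)) ∈ V) (u : Γ) :
    (translatesSpan φ).toSubmodule ≤ V.comap (LinearMap.funLeft k k (u * ·)) :=
  translatesSpan_le fun h => hV u h

lemma matrixCoeff_mem_of_forall_translate_mem {φ : Γ → k} {V : Submodule k (Γ → k)}
    (hV : ∀ u h, (fun g => φ (u * g * h)) ∈ V)
    [FiniteDimensional k (translatesSpan φ).toSubmodule]
    (ξ : Module.Dual k (translatesSpan φ).toSubmodule) (w : (translatesSpan φ).toSubmodule) :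
    (fun g => ξ ((translatesSpan φ).toRepresentation g w)) ∈ V := by
  have hcoeff : ⊤ ≤ V.comap (LinearMap.pi fun g =>
      Module.Dual.eval k _ ((translatesSpan φ).toRepresentation g w)) := by
    rw [← Submodule.span_range_proj_comp_subtype_eq_top, Submodule.span_le]
    rintro _ ⟨u, rfl⟩
    exact translatesSpan_le_comap_funLeft hV u w.2
  exact hcoeff Submodule.mem_top

theorem exists_invariant_matrixCoeff_of_forall_translate_mem (φ : Γ → k)
    (V : Submodule k (Γ → k)) [FiniteDimensional k V]
    (hV : ∀ u h, (fun g => φ (u * g * h)) ∈ V) :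
    ∃ (m : ℕ) (ρ : Representation k Γ (Fin m → k)) (x : Fin m → k)
      (ξ : Module.Dual k (Fin m → k)),
      (∀ a b, (fun g => ρ g (Pi.single b 1) a) ∈ V) ∧
      (∀ d, (∀ u, φ (u * d) = φ u) → ρ d x = x) ∧
      (∀ d, (∀ u, φ (d * u) = φ u) → ∀ w, ξ (ρ d w) = ξ w) ∧
      ∀ g, φ g = ξ (ρ g x) := by
  have : FiniteDimensional k (translatesSpan φ).toSubmodule :=
    Submodule.finiteDimensional_of_le (translatesSpan_le fun h => by
      convert hV 1 h using 1
      ext; simp)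
  let e := (Module.finBasis k (translatesSpan φ).toSubmodule).equivFun
  let φW : (translatesSpan φ).toSubmodule := ⟨φ, mem_translatesSpan_self φ⟩
  let evalOne : Module.Dual k (translatesSpan φ).toSubmodule :=
    (LinearMap.proj 1).comp (Submodule.subtype _)
  refine ⟨_, (e.conjAlgEquiv k).toMonoidHom.comp (translatesSpan φ).toRepresentation, e φW,
    evalOne ∘ₗ e.symm.toLinearMap, ?_, ?_, ?_, ?_⟩
  · intro a b
    exact matrixCoeff_mem_of_forall_translate_mem hV ((LinearMap.proj a).comp e.toLinearMap) _
  · intro d hd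
    have hfix : (translatesSpan φ).toRepresentation d φW = φW := Subtype.ext (funext hd)
    simp [LinearEquiv.conjAlgEquiv_apply, hfix]
  · intro d hd w
    simpa [LinearEquiv.conjAlgEquiv_apply, evalOne] using
      apply_mul_left_of_mem_translatesSpan hd (e.symm w).2 1
  · intro g
    simp [LinearEquiv.conjAlgEquiv_apply, evalOne, φW]

end Translates

open MvPolynomial

lemma MvPolynomial.totalDegree_bind₁_le {R σ τ : Type*} [CommSemiring R]
    (f : σ → MvPolynomial τ R) (hf : ∀ i, (f i).totalDegree ≤ 1) (p : MvPolynomial σ R) :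
    (bind₁ f p).totalDegree ≤ p.totalDegree := by
  conv_lhs => rw [p.as_sum, map_sum]
  refine totalDegree_finsetSum_le fun s hs => ?_
  rw [bind₁_monomial]
  refine (totalDegree_mul _ _).trans ?_
  rw [totalDegree_C, zero_add]
  refine (totalDegree_finsetProd _ _).trans
    ((Finset.sum_le_sum fun i _ => ?_).trans (le_totalDegree hs))
  exact (totalDegree_pow _ _).trans (by simpa using Nat.mul_le_mul_left (s i) (hf i))

section LinearSubstitution

variable {I : Type}

def entries (g : I → GLn N k) : I × Fin N × Fin N → k :=
  fun v => (g v.1 : Matrix (Fin N) (Fin N) k) v.2.1 v.2.2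

noncomputable def varMatrix (i : I) :
    Matrix (Fin N) (Fin N) (MvPolynomial (I × Fin N × Fin N) k) :=
  Matrix.of fun a b => X (i, a, b)

noncomputable def translateSubst (p q : I → GLn N k) (v : I × Fin N × Fin N) :
    MvPolynomial (I × Fin N × Fin N) k :=
  ((p v.1 : Matrix (Fin N) (Fin N) k).map C * varMatrix v.1 *
    (q v.1 : Matrix (Fin N) (Fin N) k).map C :
      Matrix (Fin N) (Fin N) (MvPolynomial (I × Fin N × Fin N) k)) v.2.1 v.2.2

lemma eval_translateSubst (p g q : I → GLn N k) (v : I × Fin N × Fin N) :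
    eval (entries g) (translateSubst p q v) = entries (p * g * q) v := by
  have hX : (varMatrix v.1).map (eval (entries g)) = g v.1 := by
    ext a b; simp [varMatrix, entries]
  rw [translateSubst, ← Matrix.map_apply (f := eval (entries g)), Matrix.map_mul, Matrix.map_mul,
    hX]
  simp [entries, Function.comp_def]

lemma totalDegree_translateSubst_le (p q : I → GLn N k) (v : I × Fin N × Fin N) :
    (translateSubst p q v).totalDegree ≤ 1 := by
  simp only [translateSubst, Matrix.mul_apply, Matrix.map_apply, Finset.sum_mul]
  refine totalDegree_finsetSum_le fun a _ => totalDegree_finsetSum_le fun b _ => ?_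
  refine (totalDegree_mul _ _).trans ?_
  rw [totalDegree_C, add_zero]
  refine (totalDegree_mul _ _).trans ?_
  simp [varMatrix]

end LinearSubstitution

section RegularFunctions

variable {I : Type} [Fintype I]

variable (k N I) in
noncomputable def invDetPow (d : ℕ) : (I → GLn N k) →* k where
  toFun g := ∏ i, ((g i : Matrix (Fin N) (Fin N) k).det)⁻¹ ^ d
  map_one' := by simp
  map_mul' g h := by simp [Matrix.det_mul, mul_pow, Finset.prod_mul_distrib, mul_comm]

variable (k N I) in
noncomputable def regularFunOfPoly (d : ℕ) :
    MvPolynomial (I × Fin N × Fin N) k →ₗ[k] ((I → GLn N k) → k) where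
  toFun P g := eval (entries g) P * invDetPow k N I d g
  map_add' P Q := by ext; simp [add_mul]
  map_smul' c P := by ext; simp [mul_assoc]

variable (k N I) in
noncomputable def regularOfDegree (D d : ℕ) : Submodule k ((I → GLn N k) → k) :=
  (restrictTotalDegree (I × Fin N × Fin N) k D).map (regularFunOfPoly k N I d)

instance (D d : ℕ) : FiniteDimensional k (regularOfDegree k N I D d) :=
  Module.Finite.map _ _

lemma isRegularFun_iff_exists_mem_regularOfDegree {f : (I → GLn N k) → k} :
    IsRegularFun f ↔ ∃ D d, f ∈ regularOfDegree k N I D d := by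
  constructor
  · rintro ⟨d, P, hP⟩
    exact ⟨P.totalDegree, d, P, (mem_restrictTotalDegree _ _ _).mpr le_rfl, (funext hP).symm⟩
  · rintro ⟨D, d, P, -, rfl⟩
    exact ⟨d, P, fun g => rfl⟩

lemma comp_mul_mul_mem_regularOfDegree {D d : ℕ} {F : (I → GLn N k) → k}
    (hF : F ∈ regularOfDegree k N I D d) (p q : I → GLn N k) :
    (fun g => F (p * g * q)) ∈ regularOfDegree k N I D d := by
  obtain ⟨P, hP, rfl⟩ := hF
  refine ⟨C (invDetPow k N I d p * invDetPow k N I d q) * bind₁ (translateSubst p q) P, ?_, ?_⟩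
  · rw [SetLike.mem_coe, mem_restrictTotalDegree] at hP ⊢
    refine (totalDegree_mul _ _).trans ?_
    rw [totalDegree_C, zero_add]
    exact (totalDegree_bind₁_le _ (totalDegree_translateSubst_le p q) P).trans hP
  · ext g
    have hbind :
        eval (entries g) (bind₁ (translateSubst p q) P) = eval (entries (p * g * q)) P := by
      rw [show entries (p * g * q) = eval (entries g) ∘ translateSubst p q from
        funext fun v => (eval_translateSubst p g q v).symm, eval_assoc]
      rfl
    simp only [regularFunOfPoly, LinearMap.coe_mk, AddHom.coe_mk, map_mul, eval_C, hbind]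
    ring

end RegularFunctions

theorem apply_const_mul_mul_const {G : Subgroup (GLn N k)} {I : Type}
    {f : (I → GLn N k) → k}
    (hinv : ∀ h h' : GLn N k, h ∈ G → h' ∈ G → ∀ g : I → GLn N k, (∀ i, g i ∈ G) →
      f (fun i => h * g i * h') = f g)
    {c u c' : I → GLn N k} (hc : ∀ i, c i ∈ G) (hu : ∀ i, u i ∈ G) (hc' : ∀ i, c' i ∈ G)
    (hc_const : ∃ h, ∀ i, c i = h) (hc'_const : ∃ h', ∀ i, c' i = h') :
    f (c * u * c') = f u := by
  rcases isEmpty_or_nonempty I with hI | ⟨⟨i₀⟩⟩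
  · exact congrArg f (Subsingleton.elim _ _)
  obtain ⟨h, rfl⟩ : ∃ h, c = fun _ => h := hc_const.imp fun h => funext
  obtain ⟨h', rfl⟩ : ∃ h', c' = fun _ => h' := hc'_const.imp fun h' => funext
  exact hinv h h' (hc i₀) (hc' i₀) u hu

theorem biinvariant_function_is_matrix_coefficient_general
    {k : Type} [Field k] {N : ℕ} {I : Type} [Fintype I]
    (G : Subgroup (GLn N k))
    (f : (I → GLn N k) → k) (hreg : IsRegularFun f)
    (hinv : ∀ h h' : GLn N k, h ∈ G → h' ∈ G → ∀ g : I → GLn N k, (∀ i, g i ∈ G) →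
      f (fun i => h * g i * h') = f g) :
    ∃ (m : ℕ)
      (ρ : Representation k ↥(Subgroup.pi Set.univ fun _ : I => G) (Fin m → k))
      (x : Fin m → k) (ξ : Module.Dual k (Fin m → k)),
      -- `ρ` is a rational (algebraic) representation: its matrix coefficients are regular
      (∀ a b : Fin m, ∃ F : (I → GLn N k) → k, IsRegularFun F ∧
        ∀ g : ↥(Subgroup.pi Set.univ fun _ : I => G),
          F (g : I → GLn N k) = ρ g (Pi.single b 1) a) ∧
      -- `x` is invariant under the diagonal `G`-action
      (∀ g : ↥(Subgroup.pi Set.univ fun _ : I => G),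
        (∃ c : GLn N k, ∀ i, (g : I → GLn N k) i = c) → ρ g x = x) ∧
      -- `ξ` is invariant under the diagonal `G`-action
      (∀ g : ↥(Subgroup.pi Set.univ fun _ : I => G),
        (∃ c : GLn N k, ∀ i, (g : I → GLn N k) i = c) → ∀ w, ξ (ρ g w) = ξ w) ∧
      -- `f` is the matrix coefficient of `(x, ξ)`
      ∀ g : ↥(Subgroup.pi Set.univ fun _ : I => G), f (g : I → GLn N k) = ξ (ρ g x) := by
  obtain ⟨D, d, hf⟩ := isRegularFun_iff_exists_mem_regularOfDegree.mp hreg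
  let Gpi := Subgroup.pi Set.univ fun _ : I => G
  have hmem (u : Gpi) (i : I) : (u : I → GLn N k) i ∈ G := u.2 i (Set.mem_univ i)
  let V := (regularOfDegree k N I D d).map (LinearMap.funLeft k k (Subtype.val : Gpi → _))
  obtain ⟨m, ρ, x, ξ, hcoeff, hx, hξ, hfx⟩ :=
    exists_invariant_matrixCoeff_of_forall_translate_mem (fun g : Gpi => f g) V
      fun u h => Submodule.mem_map_of_mem (comp_mul_mul_mem_regularOfDegree hf u h)
  refine ⟨m, ρ, x, ξ, fun a b => ?_, fun g hg => hx g fun u => ?_, fun g hg => hξ g fun u => ?_,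
    hfx⟩
  · obtain ⟨F, hF, hFρ⟩ := hcoeff a b
    exact ⟨F, isRegularFun_iff_exists_mem_regularOfDegree.mpr ⟨D, d, hF⟩, congrFun hFρ⟩
  · simpa using apply_const_mul_mul_const (c := 1) hinv (fun _ => one_mem G) (hmem u)
      (hmem g) ⟨1, fun _ => rfl⟩ hg
  · simpa using apply_const_mul_mul_const (c' := 1) hinv (hmem g) (hmem u)
      (fun _ => one_mem G) hg ⟨1, fun _ => rfl⟩

/-- **Matrix coefficients exhaust the bi-invariant functions**: for a reductive group `G`
over an algebraically closed field of characteristic zero and a finite set `I`, every regular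
function on `G^I` invariant under left and right diagonal translation by `G` is of the form
`f((g_i)) = ⟨ξ, (g_i) · x⟩` for some finite-dimensional rational representation of `G^I` and
vectors `x`, `ξ` invariant under the diagonal `G`-action. -/
theorem biinvariant_function_is_matrix_coefficient
    {k : Type} [Field k] [IsAlgClosed k] [CharZero k] {N : ℕ} {I : Type} [Fintype I]
    (G : Subgroup (GLn N k)) (hGalg : IsAlgSubgroup G) (hGred : IsReductive G)
    (f : (I → GLn N k) → k) (hreg : IsRegularFun f)
    (hinv : ∀ h h' : GLn N k, h ∈ G → h' ∈ G → ∀ g : I → GLn N k, (∀ i, g i ∈ G) →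
      f (fun i => h * g i * h') = f g) :
    ∃ (m : ℕ)
      (ρ : Representation k ↥(Subgroup.pi Set.univ fun _ : I => G) (Fin m → k))
      (x : Fin m → k) (ξ : Module.Dual k (Fin m → k)),
      -- `ρ` is a rational (algebraic) representation: its matrix coefficients are regular
      (∀ a b : Fin m, ∃ F : (I → GLn N k) → k, IsRegularFun F ∧
        ∀ g : ↥(Subgroup.pi Set.univ fun _ : I => G),
          F (g : I → GLn N k) = ρ g (Pi.single b 1) a) ∧
      -- `x` is invariant under the diagonal `G`-action
      (∀ g : ↥(Subgroup.pi Set.univ fun _ : I => G),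
        (∃ c : GLn N k, ∀ i, (g : I → GLn N k) i = c) → ρ g x = x) ∧
      -- `ξ` is invariant under the diagonal `G`-action
      (∀ g : ↥(Subgroup.pi Set.univ fun _ : I => G),
        (∃ c : GLn N k, ∀ i, (g : I → GLn N k) i = c) → ∀ w, ξ (ρ g w) = ξ w) ∧
      -- `f` is the matrix coefficient of `(x, ξ)`
      ∀ g : ↥(Subgroup.pi Set.univ fun _ : I => G), f (g : I → GLn N k) = ξ (ρ g x) :=
  biinvariant_function_is_matrix_coefficient_general G f hreg hinv
end

section
/- With the same axiomatics as in the previous statement (functors H_{I,W}, coalescence isomorphisms χ_ζ functorial in W, Γ^J-equivariant, and compatible with composition), the excursion operators satisfy the product relation: S_{I_1 ∪ I_2, W_1 ⊠ W_2, x_1 ⊗ x_2, ξ_1 ⊗ ξ_2, (γ^1_i)×(γ^2_i)} = S_{I_1, W_1, x_1, ξ_1, (γ^1_i)} ∘ S_{I_2, W_2, x_2, ξ_2, (γ^2_i)}. In particular the excursion operators generate a commutative subalgebra of End(H_{\{0\},1}). -/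
open TensorProduct

/-- The abstract data underlying Lafforgue's excursion construction: for every finite set
(type) `I` and every representation `ρ` of `Ĝ^I` on a vector space `W`, a space `H I W ρ`
(the Hecke-finite cohomology `H_{I,W}`), functorially in `W` (via `map`), carrying an action
of `Γ^I` (via `gal`), together with coalescence isomorphisms `χ_ζ` (via `chi`) for every map
of index sets `ζ : I → J`, functorial in `W`, `Γ^J`-equivariant via the diagonal
`Γ^J → Γ^I`, and compatible with composition of the `ζ`'s. -/
structure ExcursionData (E : Type) [Field E] (G : Type) [Group G] (Γ : Type) [Group Γ] where
  /-- the spaces `H_{I,W}` -/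
  H : (I : Type) → (W : Type) → [AddCommGroup W] → [Module E W] →
      ((I → G) → Module.End E W) → ModuleCat E
  /-- functoriality in `W`: the maps `H(u)` for `Ĝ^I`-equivariant `u` -/
  map : {I : Type} → {W W' : Type} → [AddCommGroup W] → [Module E W] →
      [AddCommGroup W'] → [Module E W'] →
      (ρ : (I → G) → Module.End E W) → (ρ' : (I → G) → Module.End E W') →
      (u : W →ₗ[E] W') → (∀ g : I → G, u ∘ₗ ρ g = ρ' g ∘ₗ u) →
      (H I W ρ →ₗ[E] H I W' ρ')
  /-- the action of `Γ^I` on `H_{I,W}` -/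
  gal : {I : Type} → {W : Type} → [AddCommGroup W] → [Module E W] →
      (ρ : (I → G) → Module.End E W) → (I → Γ) → (H I W ρ →ₗ[E] H I W ρ)
  /-- the coalescence isomorphisms `χ_ζ : H_{I,W} ≅ H_{J,W^ζ}` -/
  chi : {I J : Type} → {W : Type} → [AddCommGroup W] → [Module E W] →
      (ρ : (I → G) → Module.End E W) → (ζ : I → J) →
      (H I W ρ ≃ₗ[E] H J W (fun h => ρ (fun i => h (ζ i))))
  map_id : ∀ {I W : Type} [AddCommGroup W] [Module E W]
      (ρ : (I → G) → Module.End E W) (hu : ∀ g : I → G, LinearMap.id ∘ₗ ρ g = ρ g ∘ₗ LinearMap.id),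
      map ρ ρ LinearMap.id hu = LinearMap.id
  map_comp : ∀ {I W W' W'' : Type} [AddCommGroup W] [Module E W] [AddCommGroup W']
      [Module E W'] [AddCommGroup W''] [Module E W'']
      (ρ : (I → G) → Module.End E W) (ρ' : (I → G) → Module.End E W')
      (ρ'' : (I → G) → Module.End E W'')
      (u : W →ₗ[E] W') (u' : W' →ₗ[E] W'')
      (hu : ∀ g, u ∘ₗ ρ g = ρ' g ∘ₗ u) (hu' : ∀ g, u' ∘ₗ ρ' g = ρ'' g ∘ₗ u')
      (hu'' : ∀ g, (u' ∘ₗ u) ∘ₗ ρ g = ρ'' g ∘ₗ (u' ∘ₗ u)),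
      map ρ ρ'' (u' ∘ₗ u) hu'' = (map ρ' ρ'' u' hu') ∘ₗ (map ρ ρ' u hu)
  gal_one : ∀ {I W : Type} [AddCommGroup W] [Module E W]
      (ρ : (I → G) → Module.End E W), gal ρ (fun _ => (1 : Γ)) = LinearMap.id
  gal_mul : ∀ {I W : Type} [AddCommGroup W] [Module E W]
      (ρ : (I → G) → Module.End E W) (γ γ' : I → Γ),
      gal ρ (γ * γ') = (gal ρ γ) ∘ₗ (gal ρ γ')
  map_gal : ∀ {I W W' : Type} [AddCommGroup W] [Module E W] [AddCommGroup W'] [Module E W']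
      (ρ : (I → G) → Module.End E W) (ρ' : (I → G) → Module.End E W')
      (u : W →ₗ[E] W') (hu : ∀ g, u ∘ₗ ρ g = ρ' g ∘ₗ u) (γ : I → Γ),
      (map ρ ρ' u hu) ∘ₗ gal ρ γ = gal ρ' γ ∘ₗ (map ρ ρ' u hu)
  chi_map : ∀ {I J : Type} {W W' : Type} [AddCommGroup W] [Module E W] [AddCommGroup W']
      [Module E W'] (ρ : (I → G) → Module.End E W) (ρ' : (I → G) → Module.End E W')
      (ζ : I → J) (u : W →ₗ[E] W') (hu : ∀ g, u ∘ₗ ρ g = ρ' g ∘ₗ u)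
      (hu' : ∀ h : J → G, u ∘ₗ ρ (fun i => h (ζ i)) = ρ' (fun i => h (ζ i)) ∘ₗ u),
      (chi ρ' ζ).toLinearMap ∘ₗ map ρ ρ' u hu =
        (map (fun h => ρ (fun i => h (ζ i))) (fun h => ρ' (fun i => h (ζ i))) u hu') ∘ₗ
          (chi ρ ζ).toLinearMap
  chi_gal : ∀ {I J : Type} {W : Type} [AddCommGroup W] [Module E W]
      (ρ : (I → G) → Module.End E W) (ζ : I → J) (γJ : J → Γ),
      (chi ρ ζ).toLinearMap ∘ₗ gal ρ (fun i => γJ (ζ i)) =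
        gal (fun h => ρ (fun i => h (ζ i))) γJ ∘ₗ (chi ρ ζ).toLinearMap
  chi_comp : ∀ {I J K : Type} {W : Type} [AddCommGroup W] [Module E W]
      (ρ : (I → G) → Module.End E W) (ζ : I → J) (η : J → K),
      (chi ρ (fun i => η (ζ i))).toLinearMap =
        (chi (fun h => ρ (fun i => h (ζ i))) η).toLinearMap ∘ₗ (chi ρ ζ).toLinearMap

variable {E : Type} [Field E] {G : Type} [Group G] {Γ : Type} [Group Γ]

/-- The trivial representation `𝟏` of `Ĝ^I` on `E`. -/
def trivRep (E : Type) [Field E] (G : Type) [Group G] (I : Type) :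
    (I → G) → Module.End E E := fun _ => LinearMap.id

/-- The representation `W^{ζ_I}` of `Ĝ` (indexed by the one-element set) obtained by
restricting a representation `ρ` of `Ĝ^I` along the diagonal. -/
def diagRep {I W : Type} [AddCommGroup W] [Module E W]
    (ρ : (I → G) → Module.End E W) : (PUnit → G) → Module.End E W :=
  fun h => ρ (fun _ => h PUnit.unit)

/-- The excursion operator `S_{I,W,x,ξ,(γ_i)}` on `H_{{0},𝟏}`: the composite
`H(x)`, `χ_{ζ_I}⁻¹`, `(γ_i)_{i∈I}`, `χ_{ζ_I}`, `H(ξ)`. -/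
def excursionOp (D : ExcursionData E G Γ) (I : Type) (W : Type) [AddCommGroup W] [Module E W]
    (ρ : (I → G) → Module.End E W) (xm : E →ₗ[E] W) (ξm : W →ₗ[E] E)
    (hx : ∀ h : PUnit → G, xm ∘ₗ trivRep E G PUnit h = diagRep ρ h ∘ₗ xm)
    (hξ : ∀ h : PUnit → G, ξm ∘ₗ diagRep ρ h = trivRep E G PUnit h ∘ₗ ξm)
    (γ : I → Γ) :
    (D.H PUnit E (trivRep E G PUnit)) →ₗ[E] (D.H PUnit E (trivRep E G PUnit)) :=
  (D.map (diagRep ρ) (trivRep E G PUnit) ξm hξ) ∘ₗ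
    (D.chi ρ (fun _ : I => PUnit.unit)).toLinearMap ∘ₗ
      (D.gal ρ γ) ∘ₗ
        (D.chi ρ (fun _ : I => PUnit.unit)).symm.toLinearMap ∘ₗ
          (D.map (trivRep E G PUnit) (diagRep ρ) xm hx)

/-- The external tensor product `W₁ ⊠ W₂` as a representation of `Ĝ^{I₁ ∪ I₂}`. -/
noncomputable def extTensorRep {I₁ I₂ W₁ W₂ : Type} [AddCommGroup W₁] [Module E W₁]
    [AddCommGroup W₂] [Module E W₂]
    (ρ₁ : (I₁ → G) → Module.End E W₁) (ρ₂ : (I₂ → G) → Module.End E W₂) :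
    (I₁ ⊕ I₂ → G) → Module.End E (W₁ ⊗[E] W₂) :=
  fun g => TensorProduct.map (ρ₁ (fun i => g (Sum.inl i))) (ρ₂ (fun i => g (Sum.inr i)))

/-- The vector `x₁ ⊗ x₂` as a morphism `𝟏 → W₁ ⊠ W₂`. -/
noncomputable def tensorVec {W₁ W₂ : Type} [AddCommGroup W₁] [Module E W₁]
    [AddCommGroup W₂] [Module E W₂] (x₁ : E →ₗ[E] W₁) (x₂ : E →ₗ[E] W₂) :
    E →ₗ[E] W₁ ⊗[E] W₂ :=
  TensorProduct.map x₁ x₂ ∘ₗ (TensorProduct.lid E E).symm.toLinearMap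

/-- The form `ξ₁ ⊗ ξ₂` as a morphism `W₁ ⊠ W₂ → 𝟏`. -/
noncomputable def tensorForm {W₁ W₂ : Type} [AddCommGroup W₁] [Module E W₁]
    [AddCommGroup W₂] [Module E W₂] (ξ₁ : W₁ →ₗ[E] E) (ξ₂ : W₂ →ₗ[E] E) :
    W₁ ⊗[E] W₂ →ₗ[E] E :=
  (TensorProduct.lid E E).toLinearMap ∘ₗ TensorProduct.map ξ₁ ξ₂

/-!
Write `γ¹ × γ² = (γ¹, 1) · (1, γ²)`. After coalescing `I₁` to a point, the action of `(1, γ²)`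
on `H_{I₁ ∪ I₂, W₁ ⊠ W₂}` is intertwined, through the `Ĝ^{{0} ∪ I₂}`-equivariant map
`x₁ ⊗ Id : W₂ → W₁ ⊠ W₂`, with the action of `γ²` on `H_{I₂, W₂}`; symmetrically, after
coalescing `I₂`, the map `Id ⊗ ξ₂ : W₁ ⊠ W₂ → W₁` intertwines `(γ¹, 1)` with `γ¹`. As
`(Id ⊗ ξ₂) ∘ (x₁ ⊗ Id) = x₁ ∘ ξ₂`, functoriality of `H` splits the excursion for `W₁ ⊠ W₂` into
`S₁ ∘ S₂`. The excursion for `W₁ ⊠ W₂` is unchanged by relabelling `I₁ ∪ I₂` as `I₂ ∪ I₁` and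
transporting along `W₁ ⊠ W₂ ≅ W₂ ⊠ W₁`, so it also equals `S₂ ∘ S₁`.
-/

namespace LinearEquiv

theorem conj_eq_of_comp_eq {R M N : Type*} [CommSemiring R] [AddCommMonoid M] [Module R M]
    [AddCommMonoid N] [Module R N] (e : M ≃ₗ[R] N) {f : Module.End R M} {g : Module.End R N}
    (h : e.toLinearMap ∘ₗ f = g ∘ₗ e.toLinearMap) : e.conj f = g := by
  rw [conj_apply, h]
  ext
  simp

end LinearEquiv

section Contraction

variable {R M N : Type*} [CommSemiring R] [AddCommMonoid M] [Module R M]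
  [AddCommMonoid N] [Module R N]

noncomputable def contractSnd (ξ : N →ₗ[R] R) : M ⊗[R] N →ₗ[R] M :=
  (TensorProduct.rid R M).toLinearMap ∘ₗ ξ.lTensor M

@[simp]
theorem contractSnd_tmul (ξ : N →ₗ[R] R) (m : M) (n : N) :
    contractSnd ξ (m ⊗ₜ[R] n) = ξ n • m := by
  simp [contractSnd]

theorem mk_comp_eq_map_comp_mk {A : Module.End R M} {m : M} (hm : A m = m)
    (B : Module.End R N) :
    TensorProduct.mk R M N m ∘ₗ B = TensorProduct.map A B ∘ₗ TensorProduct.mk R M N m := by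
  ext n
  simp [hm]

theorem contractSnd_comp_map {ξ : N →ₗ[R] R} (A : Module.End R M) {B : Module.End R N}
    (hB : ξ ∘ₗ B = ξ) :
    contractSnd ξ ∘ₗ TensorProduct.map A B = A ∘ₗ contractSnd ξ := by
  ext m n
  simp [← LinearMap.comp_apply ξ B, hB]

theorem contractSnd_comp_mk (x : R →ₗ[R] M) (ξ : N →ₗ[R] R) :
    contractSnd ξ ∘ₗ TensorProduct.mk R M N (x 1) = x ∘ₗ ξ := by
  ext n
  simp [← map_smul]

end Contraction

namespace ExcursionData

variable (D : ExcursionData E G Γ)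

theorem map_apply_of_comp_eq {I W W' W'' : Type} [AddCommGroup W] [Module E W]
    [AddCommGroup W'] [Module E W'] [AddCommGroup W''] [Module E W'']
    {ρ : (I → G) → Module.End E W} {ρ' : (I → G) → Module.End E W'}
    {ρ'' : (I → G) → Module.End E W''} {u : W →ₗ[E] W'} {u' : W' →ₗ[E] W''}
    {v : W →ₗ[E] W''} (h : u' ∘ₗ u = v) (hu : ∀ g, u ∘ₗ ρ g = ρ' g ∘ₗ u)
    (hu' : ∀ g, u' ∘ₗ ρ' g = ρ'' g ∘ₗ u') (hv : ∀ g, v ∘ₗ ρ g = ρ'' g ∘ₗ v)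
    (y : D.H I W ρ) :
    D.map ρ ρ'' v hv y = D.map ρ' ρ'' u' hu' (D.map ρ ρ' u hu y) := by
  subst h
  rw [D.map_comp ρ ρ' ρ'' u u' hu hu' hv]
  rfl

def diagGal {I W : Type} [AddCommGroup W] [Module E W] (ρ : (I → G) → Module.End E W)
    (γ : I → Γ) : Module.End E (D.H PUnit W (diagRep ρ)) :=
  (D.chi ρ fun _ => PUnit.unit).conj (D.gal ρ γ)

theorem diagGal_mul_apply {I W : Type} [AddCommGroup W] [Module E W]
    (ρ : (I → G) → Module.End E W) (γ γ' : I → Γ) (y : D.H PUnit W (diagRep ρ)) :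
    D.diagGal ρ (γ * γ') y = D.diagGal ρ γ (D.diagGal ρ γ' y) := by
  rw [diagGal, D.gal_mul, LinearEquiv.conj_comp]
  rfl

theorem diagGal_comp {I J W : Type} [AddCommGroup W] [Module E W]
    (ρ : (I → G) → Module.End E W) (ζ : I → J) (γ : J → Γ) :
    D.diagGal ρ (fun i => γ (ζ i)) = D.diagGal (fun h => ρ (fun i => h (ζ i))) γ := by
  have hχ : D.chi ρ (fun _ => PUnit.unit) =
      (D.chi ρ ζ).trans (D.chi (fun h => ρ (fun i => h (ζ i))) fun _ => PUnit.unit) :=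
    LinearEquiv.toLinearMap_injective (D.chi_comp ρ ζ fun _ => PUnit.unit)
  rw [diagGal, diagGal, hχ, ← LinearEquiv.conj_trans, LinearEquiv.trans_apply,
    (D.chi ρ ζ).conj_eq_of_comp_eq (D.chi_gal ρ ζ γ)]

theorem map_diagGal_apply {J V V' : Type} [AddCommGroup V] [Module E V] [AddCommGroup V']
    [Module E V'] (σ : (J → G) → Module.End E V) (σ' : (J → G) → Module.End E V')
    (u : V →ₗ[E] V') (hu : ∀ g, u ∘ₗ σ g = σ' g ∘ₗ u)
    (hud : ∀ h, u ∘ₗ diagRep σ h = diagRep σ' h ∘ₗ u) (γ : J → Γ)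
    (y : D.H PUnit V (diagRep σ)) :
    D.map (diagRep σ) (diagRep σ') u hud (D.diagGal σ γ y) =
      D.diagGal σ' γ (D.map (diagRep σ) (diagRep σ') u hud y) := by
  have hχ := LinearMap.congr_fun (D.chi_map σ σ' (fun _ => PUnit.unit) u hu hud)
  have hgal := LinearMap.congr_fun (D.map_gal σ σ' u hu γ)
  simp only [LinearMap.comp_apply, LinearEquiv.coe_coe] at hχ hgal
  obtain ⟨z, rfl⟩ := (D.chi σ fun _ => PUnit.unit).surjective y
  unfold diagRep
  simp only [diagGal, LinearEquiv.conj_apply, LinearMap.comp_apply, LinearEquiv.coe_coe,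
    LinearEquiv.symm_apply_apply]
  rw [← hχ, ← hχ, LinearEquiv.symm_apply_apply, hgal]

theorem map_diagGal_comp_apply {I K J V V' : Type} [AddCommGroup V] [Module E V]
    [AddCommGroup V'] [Module E V'] (ρ : (I → G) → Module.End E V)
    (τ : (K → G) → Module.End E V') (ζ : I → J) (ι : K → J) (u : V →ₗ[E] V')
    (hu : ∀ h : J → G, u ∘ₗ ρ (fun i => h (ζ i)) = τ (fun k => h (ι k)) ∘ₗ u)
    (hud : ∀ h, u ∘ₗ diagRep ρ h = diagRep τ h ∘ₗ u) (γ : J → Γ)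
    (y : D.H PUnit V (diagRep ρ)) :
    D.map (diagRep ρ) (diagRep τ) u hud (D.diagGal ρ (fun i => γ (ζ i)) y) =
      D.diagGal τ (fun k => γ (ι k)) (D.map (diagRep ρ) (diagRep τ) u hud y) := by
  rw [D.diagGal_comp ρ ζ, D.diagGal_comp τ ι]
  exact D.map_diagGal_apply _ _ u hu hud γ y

end ExcursionData

section Excursion

variable (D : ExcursionData E G Γ)

theorem excursionOp_apply {I W : Type} [AddCommGroup W] [Module E W]
    (ρ : (I → G) → Module.End E W) (x : E →ₗ[E] W) (ξ : W →ₗ[E] E)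
    (hx : ∀ h : PUnit → G, x ∘ₗ trivRep E G PUnit h = diagRep ρ h ∘ₗ x)
    (hξ : ∀ h : PUnit → G, ξ ∘ₗ diagRep ρ h = trivRep E G PUnit h ∘ₗ ξ) (γ : I → Γ)
    (y : D.H PUnit E (trivRep E G PUnit)) :
    excursionOp D I W ρ x ξ hx hξ γ y =
      D.map (diagRep ρ) (trivRep E G PUnit) ξ hξ
        (D.diagGal ρ γ (D.map (trivRep E G PUnit) (diagRep ρ) x hx y)) :=
  rfl

theorem excursionOp_reindex {I J W : Type} [AddCommGroup W] [Module E W]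
    (ρ : (I → G) → Module.End E W) (ζ : I → J) (x : E →ₗ[E] W) (ξ : W →ₗ[E] E)
    (hx : ∀ h : PUnit → G, x ∘ₗ trivRep E G PUnit h = diagRep ρ h ∘ₗ x)
    (hξ : ∀ h : PUnit → G, ξ ∘ₗ diagRep ρ h = trivRep E G PUnit h ∘ₗ ξ) (γ : J → Γ) :
    excursionOp D I W ρ x ξ hx hξ (fun i => γ (ζ i)) =
      excursionOp D J W (fun h => ρ (fun i => h (ζ i))) x ξ hx hξ γ :=
  LinearMap.ext fun y => by
    rw [excursionOp_apply, D.diagGal_comp]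
    rfl

theorem excursionOp_eq_of_intertwines {I W W' : Type} [AddCommGroup W] [Module E W]
    [AddCommGroup W'] [Module E W'] (ρ : (I → G) → Module.End E W)
    (ρ' : (I → G) → Module.End E W') (u : W →ₗ[E] W') (hu : ∀ g, u ∘ₗ ρ g = ρ' g ∘ₗ u)
    {x : E →ₗ[E] W} {x' : E →ₗ[E] W'} {ξ : W →ₗ[E] E} {ξ' : W' →ₗ[E] E}
    (hux : u ∘ₗ x = x') (hξu : ξ' ∘ₗ u = ξ)
    (hx : ∀ h : PUnit → G, x ∘ₗ trivRep E G PUnit h = diagRep ρ h ∘ₗ x)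
    (hξ : ∀ h : PUnit → G, ξ ∘ₗ diagRep ρ h = trivRep E G PUnit h ∘ₗ ξ)
    (hx' : ∀ h : PUnit → G, x' ∘ₗ trivRep E G PUnit h = diagRep ρ' h ∘ₗ x')
    (hξ' : ∀ h : PUnit → G, ξ' ∘ₗ diagRep ρ' h = trivRep E G PUnit h ∘ₗ ξ') (γ : I → Γ) :
    excursionOp D I W' ρ' x' ξ' hx' hξ' γ = excursionOp D I W ρ x ξ hx hξ γ := by
  have hud : ∀ h, u ∘ₗ diagRep ρ h = diagRep ρ' h ∘ₗ u := fun h => hu _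
  ext y
  rw [excursionOp_apply, excursionOp_apply, D.map_apply_of_comp_eq hux hx hud hx',
    D.map_apply_of_comp_eq hξu hud hξ' hξ, D.map_diagGal_apply ρ ρ' u hu hud]

end Excursion

section Tensor

variable {W₁ W₂ : Type} [AddCommGroup W₁] [Module E W₁] [AddCommGroup W₂] [Module E W₂]

theorem tensorVec_comp_trivRep {I₁ I₂ : Type} {ρ₁ : (I₁ → G) → Module.End E W₁}
    {ρ₂ : (I₂ → G) → Module.End E W₂} {x₁ : E →ₗ[E] W₁} {x₂ : E →ₗ[E] W₂}
    (hx₁ : ∀ h : PUnit → G, x₁ ∘ₗ trivRep E G PUnit h = diagRep ρ₁ h ∘ₗ x₁)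
    (hx₂ : ∀ h : PUnit → G, x₂ ∘ₗ trivRep E G PUnit h = diagRep ρ₂ h ∘ₗ x₂) (h : PUnit → G) :
    tensorVec x₁ x₂ ∘ₗ trivRep E G PUnit h = diagRep (extTensorRep ρ₁ ρ₂) h ∘ₗ tensorVec x₁ x₂ := by
  calc tensorVec x₁ x₂ ∘ₗ trivRep E G PUnit h
      = TensorProduct.map (diagRep ρ₁ h ∘ₗ x₁) (diagRep ρ₂ h ∘ₗ x₂) ∘ₗ
          (TensorProduct.lid E E).symm.toLinearMap := by rw [← hx₁, ← hx₂]; rfl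
    _ = _ := by rw [TensorProduct.map_comp]; rfl

theorem tensorForm_comp_diagRep {I₁ I₂ : Type} {ρ₁ : (I₁ → G) → Module.End E W₁}
    {ρ₂ : (I₂ → G) → Module.End E W₂} {ξ₁ : W₁ →ₗ[E] E} {ξ₂ : W₂ →ₗ[E] E}
    (hξ₁ : ∀ h : PUnit → G, ξ₁ ∘ₗ diagRep ρ₁ h = trivRep E G PUnit h ∘ₗ ξ₁)
    (hξ₂ : ∀ h : PUnit → G, ξ₂ ∘ₗ diagRep ρ₂ h = trivRep E G PUnit h ∘ₗ ξ₂) (h : PUnit → G) :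
    tensorForm ξ₁ ξ₂ ∘ₗ diagRep (extTensorRep ρ₁ ρ₂) h =
      trivRep E G PUnit h ∘ₗ tensorForm ξ₁ ξ₂ := by
  calc tensorForm ξ₁ ξ₂ ∘ₗ diagRep (extTensorRep ρ₁ ρ₂) h
      = (TensorProduct.lid E E).toLinearMap ∘ₗ
          TensorProduct.map (ξ₁ ∘ₗ diagRep ρ₁ h) (ξ₂ ∘ₗ diagRep ρ₂ h) := by
        rw [TensorProduct.map_comp]; rfl
    _ = _ := by rw [hξ₁, hξ₂]; rfl

theorem mk_comp_eq_tensorVec (x₁ : E →ₗ[E] W₁) (x₂ : E →ₗ[E] W₂) :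
    TensorProduct.mk E W₁ W₂ (x₁ 1) ∘ₗ x₂ = tensorVec x₁ x₂ := by
  ext
  simp [tensorVec]

theorem comp_contractSnd_eq_tensorForm (ξ₁ : W₁ →ₗ[E] E) (ξ₂ : W₂ →ₗ[E] E) :
    ξ₁ ∘ₗ contractSnd ξ₂ = tensorForm ξ₁ ξ₂ := by
  ext
  simp [tensorForm, mul_comm]

theorem comm_comp_tensorVec (x₁ : E →ₗ[E] W₁) (x₂ : E →ₗ[E] W₂) :
    (TensorProduct.comm E W₁ W₂).toLinearMap ∘ₗ tensorVec x₁ x₂ = tensorVec x₂ x₁ := by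
  ext
  simp [tensorVec]

theorem tensorForm_comp_comm (ξ₁ : W₁ →ₗ[E] E) (ξ₂ : W₂ →ₗ[E] E) :
    tensorForm ξ₂ ξ₁ ∘ₗ (TensorProduct.comm E W₁ W₂).toLinearMap = tensorForm ξ₁ ξ₂ := by
  ext
  simp [tensorForm, mul_comm]

end Tensor

section Product

variable (D : ExcursionData E G Γ) {I₁ I₂ W₁ W₂ : Type} [AddCommGroup W₁] [Module E W₁]
  [AddCommGroup W₂] [Module E W₂]

theorem excursionOp_extTensorRep (ρ₁ : (I₁ → G) → Module.End E W₁)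
    (ρ₂ : (I₂ → G) → Module.End E W₂)
    (x₁ : E →ₗ[E] W₁) (ξ₁ : W₁ →ₗ[E] E) (x₂ : E →ₗ[E] W₂) (ξ₂ : W₂ →ₗ[E] E)
    (hx₁ : ∀ h : PUnit → G, x₁ ∘ₗ trivRep E G PUnit h = diagRep ρ₁ h ∘ₗ x₁)
    (hξ₁ : ∀ h : PUnit → G, ξ₁ ∘ₗ diagRep ρ₁ h = trivRep E G PUnit h ∘ₗ ξ₁)
    (hx₂ : ∀ h : PUnit → G, x₂ ∘ₗ trivRep E G PUnit h = diagRep ρ₂ h ∘ₗ x₂)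
    (hξ₂ : ∀ h : PUnit → G, ξ₂ ∘ₗ diagRep ρ₂ h = trivRep E G PUnit h ∘ₗ ξ₂)
    (hxt : ∀ h : PUnit → G, tensorVec x₁ x₂ ∘ₗ trivRep E G PUnit h =
      diagRep (extTensorRep ρ₁ ρ₂) h ∘ₗ tensorVec x₁ x₂)
    (hξt : ∀ h : PUnit → G, tensorForm ξ₁ ξ₂ ∘ₗ diagRep (extTensorRep ρ₁ ρ₂) h =
      trivRep E G PUnit h ∘ₗ tensorForm ξ₁ ξ₂)
    (γ₁ : I₁ → Γ) (γ₂ : I₂ → Γ) :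
    excursionOp D (I₁ ⊕ I₂) (W₁ ⊗[E] W₂) (extTensorRep ρ₁ ρ₂)
        (tensorVec x₁ x₂) (tensorForm ξ₁ ξ₂) hxt hξt (Sum.elim γ₁ γ₂) =
      excursionOp D I₁ W₁ ρ₁ x₁ ξ₁ hx₁ hξ₁ γ₁ ∘ₗ excursionOp D I₂ W₂ ρ₂ x₂ ξ₂ hx₂ hξ₂ γ₂ := by
  let pt {I : Type} : I → Unit := fun _ => ()
  have hmk (h : Unit ⊕ I₂ → G) : TensorProduct.mk E W₁ W₂ (x₁ 1) ∘ₗ ρ₂ (fun i => h (.inr i)) =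
      extTensorRep ρ₁ ρ₂ (fun k => h (Sum.map pt id k)) ∘ₗ TensorProduct.mk E W₁ W₂ (x₁ 1) :=
    mk_comp_eq_map_comp_mk (LinearMap.congr_fun (hx₁ fun _ => h (.inl ())) 1).symm _
  have hct (h : I₁ ⊕ Unit → G) :
      contractSnd ξ₂ ∘ₗ extTensorRep ρ₁ ρ₂ (fun k => h (Sum.map id pt k)) =
        ρ₁ (fun i => h (.inl i)) ∘ₗ contractSnd ξ₂ :=
    contractSnd_comp_map _ (hξ₂ fun _ => h (.inr ()))
  have hmkd (h : Unit → G) : TensorProduct.mk E W₁ W₂ (x₁ 1) ∘ₗ diagRep ρ₂ h =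
      diagRep (extTensorRep ρ₁ ρ₂) h ∘ₗ TensorProduct.mk E W₁ W₂ (x₁ 1) :=
    hmk fun _ => h ()
  have hctd (h : Unit → G) :
      contractSnd ξ₂ ∘ₗ diagRep (extTensorRep ρ₁ ρ₂) h = diagRep ρ₁ h ∘ₗ contractSnd ξ₂ :=
    hct fun _ => h ()
  have hγ : Sum.elim γ₁ γ₂ = (fun k => Sum.elim γ₁ (1 : Unit → Γ) (Sum.map id pt k)) *
      (fun k => Sum.elim (1 : Unit → Γ) γ₂ (Sum.map pt id k)) := by
    ext (i | i) <;> simp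
  have hv (h : Unit → G) : (x₁ ∘ₗ ξ₂) ∘ₗ diagRep ρ₂ h = diagRep ρ₁ h ∘ₗ (x₁ ∘ₗ ξ₂) := by
    rw [LinearMap.comp_assoc, hξ₂, ← LinearMap.comp_assoc, hx₁, LinearMap.comp_assoc]
  have hmid (y) := (D.map_apply_of_comp_eq (contractSnd_comp_mk x₁ ξ₂) hmkd hctd hv y).symm.trans
    (D.map_apply_of_comp_eq rfl hξ₂ hx₁ hv y)
  ext y
  rw [excursionOp_apply, hγ, D.diagGal_mul_apply,
    D.map_apply_of_comp_eq (mk_comp_eq_tensorVec x₁ x₂) hx₂ hmkd hxt,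
    ← D.map_diagGal_comp_apply ρ₂ _ Sum.inr _ _ hmk hmkd,
    D.map_apply_of_comp_eq (comp_contractSnd_eq_tensorForm ξ₁ ξ₂) hctd hξ₁ hξt,
    D.map_diagGal_comp_apply _ ρ₁ _ Sum.inl _ hct hctd, hmid]
  rfl

theorem excursionOp_extTensorRep_comm (ρ₁ : (I₁ → G) → Module.End E W₁)
    (ρ₂ : (I₂ → G) → Module.End E W₂)
    (x₁ : E →ₗ[E] W₁) (ξ₁ : W₁ →ₗ[E] E) (x₂ : E →ₗ[E] W₂) (ξ₂ : W₂ →ₗ[E] E)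
    (hxt : ∀ h : PUnit → G, tensorVec x₁ x₂ ∘ₗ trivRep E G PUnit h =
      diagRep (extTensorRep ρ₁ ρ₂) h ∘ₗ tensorVec x₁ x₂)
    (hξt : ∀ h : PUnit → G, tensorForm ξ₁ ξ₂ ∘ₗ diagRep (extTensorRep ρ₁ ρ₂) h =
      trivRep E G PUnit h ∘ₗ tensorForm ξ₁ ξ₂)
    (hxt' : ∀ h : PUnit → G, tensorVec x₂ x₁ ∘ₗ trivRep E G PUnit h =
      diagRep (extTensorRep ρ₂ ρ₁) h ∘ₗ tensorVec x₂ x₁)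
    (hξt' : ∀ h : PUnit → G, tensorForm ξ₂ ξ₁ ∘ₗ diagRep (extTensorRep ρ₂ ρ₁) h =
      trivRep E G PUnit h ∘ₗ tensorForm ξ₂ ξ₁)
    (γ₁ : I₁ → Γ) (γ₂ : I₂ → Γ) :
    excursionOp D (I₁ ⊕ I₂) (W₁ ⊗[E] W₂) (extTensorRep ρ₁ ρ₂)
        (tensorVec x₁ x₂) (tensorForm ξ₁ ξ₂) hxt hξt (Sum.elim γ₁ γ₂) =
      excursionOp D (I₂ ⊕ I₁) (W₂ ⊗[E] W₁) (extTensorRep ρ₂ ρ₁)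
        (tensorVec x₂ x₁) (tensorForm ξ₂ ξ₁) hxt' hξt' (Sum.elim γ₂ γ₁) := by
  have hswap : Sum.elim γ₂ γ₁ = fun i => Sum.elim γ₁ γ₂ (Sum.swap i) := Sum.elim_swap.symm
  rw [hswap, excursionOp_reindex D (extTensorRep ρ₂ ρ₁) Sum.swap]
  exact (excursionOp_eq_of_intertwines D (extTensorRep ρ₁ ρ₂)
    (fun g => extTensorRep ρ₂ ρ₁ fun i => g (Sum.swap i)) (TensorProduct.comm E W₁ W₂).toLinearMap
    (fun g => (TensorProduct.map_comp_comm_eq _ _).symm) (comm_comp_tensorVec x₁ x₂)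
    (tensorForm_comp_comm ξ₁ ξ₂) _ _ _ _ _).symm

end Product

/-- **Product relation for excursion operators** (relation (SIW-p2)):
`S_{I₁∪I₂, W₁⊠W₂, x₁⊗x₂, ξ₁⊗ξ₂, (γ¹)×(γ²)} = S_{I₁,W₁,x₁,ξ₁,(γ¹)} ∘ S_{I₂,W₂,x₂,ξ₂,(γ²)}`;
in particular excursion operators pairwise commute, so they generate a commutative
subalgebra of `End(H_{{0},𝟏})`. -/
theorem excursion_product (D : ExcursionData E G Γ) (I₁ I₂ : Type)
    (W₁ W₂ : Type) [AddCommGroup W₁] [Module E W₁] [AddCommGroup W₂] [Module E W₂]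
    (ρ₁ : (I₁ → G) → Module.End E W₁) (ρ₂ : (I₂ → G) → Module.End E W₂)
    (x₁ : E →ₗ[E] W₁) (ξ₁ : W₁ →ₗ[E] E) (x₂ : E →ₗ[E] W₂) (ξ₂ : W₂ →ₗ[E] E)
    (hx₁ : ∀ h : PUnit → G, x₁ ∘ₗ trivRep E G PUnit h = diagRep ρ₁ h ∘ₗ x₁)
    (hξ₁ : ∀ h : PUnit → G, ξ₁ ∘ₗ diagRep ρ₁ h = trivRep E G PUnit h ∘ₗ ξ₁)
    (hx₂ : ∀ h : PUnit → G, x₂ ∘ₗ trivRep E G PUnit h = diagRep ρ₂ h ∘ₗ x₂)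
    (hξ₂ : ∀ h : PUnit → G, ξ₂ ∘ₗ diagRep ρ₂ h = trivRep E G PUnit h ∘ₗ ξ₂)
    (hxt : ∀ h : PUnit → G, tensorVec x₁ x₂ ∘ₗ trivRep E G PUnit h =
      diagRep (extTensorRep ρ₁ ρ₂) h ∘ₗ tensorVec x₁ x₂)
    (hξt : ∀ h : PUnit → G, tensorForm ξ₁ ξ₂ ∘ₗ diagRep (extTensorRep ρ₁ ρ₂) h =
      trivRep E G PUnit h ∘ₗ tensorForm ξ₁ ξ₂)
    (γ₁ : I₁ → Γ) (γ₂ : I₂ → Γ) :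
    excursionOp D (I₁ ⊕ I₂) (W₁ ⊗[E] W₂) (extTensorRep ρ₁ ρ₂)
        (tensorVec x₁ x₂) (tensorForm ξ₁ ξ₂) hxt hξt (Sum.elim γ₁ γ₂) =
      excursionOp D I₁ W₁ ρ₁ x₁ ξ₁ hx₁ hξ₁ γ₁ ∘ₗ
        excursionOp D I₂ W₂ ρ₂ x₂ ξ₂ hx₂ hξ₂ γ₂ ∧
    excursionOp D I₁ W₁ ρ₁ x₁ ξ₁ hx₁ hξ₁ γ₁ ∘ₗ
        excursionOp D I₂ W₂ ρ₂ x₂ ξ₂ hx₂ hξ₂ γ₂ =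
      excursionOp D I₂ W₂ ρ₂ x₂ ξ₂ hx₂ hξ₂ γ₂ ∘ₗ
        excursionOp D I₁ W₁ ρ₁ x₁ ξ₁ hx₁ hξ₁ γ₁ := by
  have hprod := excursionOp_extTensorRep D ρ₁ ρ₂ x₁ ξ₁ x₂ ξ₂ hx₁ hξ₁ hx₂ hξ₂ hxt hξt γ₁ γ₂
  have hxt' := tensorVec_comp_trivRep hx₂ hx₁
  have hξt' := tensorForm_comp_diagRep hξ₂ hξ₁
  refine ⟨hprod, ?_⟩
  rw [← hprod, ← excursionOp_extTensorRep D ρ₂ ρ₁ x₂ ξ₂ x₁ ξ₁ hx₂ hξ₂ hx₁ hξ₁ hxt' hξt' γ₂ γ₁]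
  exact excursionOp_extTensorRep_comm D ρ₁ ρ₂ x₁ ξ₁ x₂ ξ₂ hxt hξt hxt' hξt' γ₁ γ₂
end
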